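/- arXiv:1709.04079 — 8 statements merged into one kernel-verified Lean document; each statement's English description precedes it below -/
import Mathlib

section
/- Let G be a graph on n vertices with average degree d = 2e(G)/n. If d ≥ 2√n, then G contains at least d⁴/36 copies of the 4-cycle C₄. -/
/-!
A labelled 4-cycle `x u y v` is a pair of distinct vertices `x, y` together with an ordered pair
of distinct common neighbours `u, v`, so their number is `T = ∑_{x ≠ y} (c² - c)` where
`c = c(x, y)` is the codegree; every copy of `C₄` is counted `|Aut C₄| = 8` times.
Counting cherries gives `S := ∑_{x ≠ y} c = ∑_v (deg² v - deg v) ≥ n (d² - d)` by Cauchy–Schwarz,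
and Cauchy–Schwarz over the `≤ n²` pairs gives `T ≥ S² / n² - S ≥ (d² - d)² - n (d² - d)`,
since `t ↦ t² / n² - t` increases for `t ≥ n² / 2`. As `n ≤ d² / 4`, this is at least `2 d⁴ / 9`.
-/

/-- Number of copies of `C₄` in `G`: the number of subgraphs isomorphic to the 4-cycle. -/
noncomputable def numC4 {V : Type} (G : SimpleGraph V) : ℕ :=
  Nat.card {H : G.Subgraph // Nonempty (H.coe ≃g SimpleGraph.cycleGraph 4)}

namespace Finset

variable {ι α : Type*}

lemma natCast_card_offDiag {R : Type*} [Ring R] (s : Finset α) :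
    (#s.offDiag : R) = #s ^ 2 - #s := by
  rw [offDiag_card, Nat.cast_sub (Nat.le_mul_self _), Nat.cast_mul, sq]

lemma sq_sum_card_div_sub_le_sum_card_offDiag (s : Finset ι) (t : ι → Finset α) {m : ℝ}
    (hm : #s ≤ m) :
    (∑ i ∈ s, (#(t i) : ℝ)) ^ 2 / m - ∑ i ∈ s, (#(t i) : ℝ) ≤ ∑ i ∈ s, (#(t i).offDiag : ℝ) := by
  have hsq : 0 ≤ ∑ i ∈ s, (#(t i) : ℝ) ^ 2 := sum_nonneg fun _ _ => sq_nonneg _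
  simp only [natCast_card_offDiag, sum_sub_distrib]
  gcongr
  exact div_le_of_le_mul₀ ((Nat.cast_nonneg _).trans hm) hsq
    ((sq_sum_le_card_mul_sum_sq.trans (mul_le_mul_of_nonneg_right hm hsq)).trans_eq (mul_comm _ _))

end Finset

lemma sq_div_sub_le_sq_div_sub {m a b : ℝ} (hm : 0 < m) (ha : m ≤ 2 * a) (hab : a ≤ b) :
    a ^ 2 / m - a ≤ b ^ 2 / m - b := by
  rw [div_sub' hm.ne', div_sub' hm.ne', div_le_div_iff_of_pos_right hm]
  nlinarith

open Finset

namespace SimpleGraph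

section Copy

variable {V W : Type*} {G : SimpleGraph V} {H : SimpleGraph W}

lemma Copy.exists_eq_comp_of_toSubgraph_eq {f g : Copy H G}
    (hfg : g.toSubgraph = f.toSubgraph) : ∃ σ : Copy H H, g = f.comp σ := by
  have hrange (a : W) : ∃ b, f b = g a := by
    obtain ⟨b, -, hb⟩ : g a ∈ f.toSubgraph.verts := hfg ▸ ⟨a, trivial, rfl⟩
    exact ⟨b, hb⟩
  choose σ hσ using hrange
  have hσ_adj {a a' : W} (h : H.Adj a a') : H.Adj (σ a) (σ a') := by
    obtain ⟨b, b', hbb', hb, hb'⟩ : f.toSubgraph.Adj (g a) (g a') := hfg ▸ ⟨a, a', h, rfl, rfl⟩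
    rwa [← f.injective (hb.trans (hσ a).symm), ← f.injective (hb'.trans (hσ a').symm)]
  refine ⟨⟨⟨σ, hσ_adj⟩, fun a a' h => g.injective ?_⟩, Copy.ext fun a => (hσ a).symm⟩
  simp only [Copy.coe_toHom, ← hσ]
  exact congrArg f h

lemma labelledCopyCount_le_mul_copyCount [Fintype V] [Fintype W] :
    G.labelledCopyCount H ≤ H.labelledCopyCount H * G.copyCount H := by
  classical
  rw [labelledCopyCount, copyCount_eq_card_image_copyToSubgraph, ← card_univ]
  refine card_le_mul_card_image _ _ fun S hS => ?_
  obtain ⟨f, -, rfl⟩ := mem_image.mp hS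
  calc #{g | g.toSubgraph = f.toSubgraph}
      ≤ #(univ.image f.comp) := card_le_card fun g hg => by
        obtain ⟨σ, rfl⟩ := Copy.exists_eq_comp_of_toSubgraph_eq (mem_filter.mp hg).2
        exact mem_image_of_mem _ (mem_univ σ)
    _ ≤ H.labelledCopyCount H := by
        rw [labelledCopyCount]
        convert card_image_le
        exact card_univ.symm

end Copy

section FourCycles

variable {V : Type*} [Fintype V] (G : SimpleGraph V) [DecidableRel G.Adj]

lemma sum_degree_le_card_mul_card_sub_one :
    ∑ v, (G.degree v : ℝ) ≤ Fintype.card V * (Fintype.card V - 1) := by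
  calc ∑ v, (G.degree v : ℝ) ≤ ∑ _v : V, ((Fintype.card V : ℝ) - 1) :=
        sum_le_sum fun v _ => le_sub_iff_add_le.2 (by exact_mod_cast G.degree_lt_card_verts v)
    _ = _ := by rw [sum_const, card_univ, nsmul_eq_mul]

variable [DecidableEq V]

lemma sum_card_inter_neighborFinset :
    ∑ p ∈ univ.offDiag, #(G.neighborFinset p.1 ∩ G.neighborFinset p.2) =
      ∑ v, #(G.neighborFinset v).offDiag := by
  simp only [card_eq_sum_ones]
  refine sum_comm' fun p v => ?_
  simp only [mem_offDiag, mem_inter, mem_neighborFinset, mem_univ, true_and, and_true]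
  grind [adj_comm]

/-- `⟨(x, y), (u, v)⟩` stands for the labelled 4-cycle `x u y v`, whose diagonals are `(x, y)`
and `(u, v)`. -/
def fourCycleTuples : Finset (Σ _ : V × V, V × V) :=
  univ.offDiag.sigma fun p => (G.neighborFinset p.1 ∩ G.neighborFinset p.2).offDiag

variable {G}

lemma mem_fourCycleTuples {x y u v : V} :
    ⟨(x, y), (u, v)⟩ ∈ G.fourCycleTuples ↔
      x ≠ y ∧ u ≠ v ∧ G.Adj x u ∧ G.Adj y u ∧ G.Adj x v ∧ G.Adj y v := by
  simp only [fourCycleTuples, mem_sigma, mem_offDiag, mem_inter, mem_neighborFinset, mem_univ,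
    true_and]
  tauto

def Copy.ofMemFourCycleTuples {x y u v : V} (h : ⟨(x, y), (u, v)⟩ ∈ G.fourCycleTuples) :
    Copy (cycleGraph 4) G where
  toHom := ⟨![x, u, y, v], fun {i j} hij => by
    obtain ⟨-, -, hxu, hyu, hxv, hyv⟩ := mem_fourCycleTuples.1 h
    fin_cases i <;> fin_cases j <;> first | exact absurd hij (by decide) | simp [*, adj_comm]⟩
  injective' i j hij := by
    obtain ⟨hxy, huv, hxu, hyu, hxv, hyv⟩ := mem_fourCycleTuples.1 h
    have := hxu.ne; have := hyu.ne; have := hxv.ne; have := hyv.ne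
    fin_cases i <;> fin_cases j <;> simp at hij <;>
      first | rfl | exact absurd hij ‹_› | exact absurd hij.symm ‹_›

variable (G) in
def copyCycleGraphFourEquiv : Copy (cycleGraph 4) G ≃ G.fourCycleTuples where
  toFun f := ⟨⟨(f 0, f 2), (f 1, f 3)⟩, by
    have hadj {i j : Fin 4} (h : (cycleGraph 4).Adj i j) : G.Adj (f i) (f j) := f.toHom.map_adj h
    exact mem_fourCycleTuples.2 ⟨f.injective.ne (by decide), f.injective.ne (by decide),
      hadj (by decide), (hadj (by decide)).symm, (hadj (by decide)).symm, hadj (by decide)⟩⟩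
  invFun q := Copy.ofMemFourCycleTuples q.2
  left_inv f := by ext i; fin_cases i <;> rfl
  right_inv _ := rfl

variable (G) in
lemma labelledCopyCount_cycleGraph_four_eq_card :
    G.labelledCopyCount (cycleGraph 4) = #G.fourCycleTuples := by
  rw [labelledCopyCount, ← Fintype.card_coe]
  convert Fintype.card_congr (copyCycleGraphFourEquiv G)

lemma labelledCopyCount_cycleGraph_four_self :
    (cycleGraph 4).labelledCopyCount (cycleGraph 4) = 8 := by
  rw [labelledCopyCount_cycleGraph_four_eq_card]
  decide

variable (G) in
theorem sub_mul_le_labelledCopyCount_cycleGraph_four [Nonempty V] {d : ℝ}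
    (hd : ∑ v, (G.degree v : ℝ) = Fintype.card V * d)
    (hdn : Fintype.card V ≤ 2 * (d ^ 2 - d)) :
    (d ^ 2 - d) ^ 2 - Fintype.card V * (d ^ 2 - d) ≤ G.labelledCopyCount (cycleGraph 4) := by
  set n : ℝ := (Fintype.card V : ℝ)
  have hn : 0 < n := by positivity
  set S := ∑ p ∈ univ.offDiag, (#(G.neighborFinset p.1 ∩ G.neighborFinset p.2) : ℝ) with hS_def
  have hS : n * (d ^ 2 - d) ≤ S := by
    have := sq_sum_card_div_sub_le_sum_card_offDiag univ (fun v => G.neighborFinset v)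
      (m := n) le_rfl
    simp only [card_neighborFinset_eq_degree, hd] at this
    rw [hS_def, ← Nat.cast_sum, sum_card_inter_neighborFinset, Nat.cast_sum]
    convert this using 1
    field_simp
  have hT : S ^ 2 / n ^ 2 - S ≤ G.labelledCopyCount (cycleGraph 4) := by
    rw [labelledCopyCount_cycleGraph_four_eq_card, fourCycleTuples, card_sigma, Nat.cast_sum]
    refine sq_sum_card_div_sub_le_sum_card_offDiag _ _ ?_
    rw [natCast_card_offDiag, card_univ]
    linarith
  calc (d ^ 2 - d) ^ 2 - n * (d ^ 2 - d) = (n * (d ^ 2 - d)) ^ 2 / n ^ 2 - n * (d ^ 2 - d) := by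
        field_simp
    _ ≤ S ^ 2 / n ^ 2 - S := sq_div_sub_le_sq_div_sub (by positivity) (by nlinarith) hS
    _ ≤ _ := hT

end FourCycles

end SimpleGraph

open SimpleGraph

lemma numC4_eq_copyCount {V : Type} [Fintype V] (G : SimpleGraph V) :
    numC4 G = G.copyCount (cycleGraph 4) := by
  classical
  rw [numC4, copyCount, ← Fintype.card_subtype, Nat.card_eq_fintype_card]
  exact Fintype.card_congr
    (Equiv.subtypeEquivRight fun H => ⟨fun ⟨e⟩ => ⟨e.symm⟩, fun ⟨e⟩ => ⟨e.symm⟩⟩)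

lemma labelledCopyCount_cycleGraph_four_le_eight_mul_numC4 {V : Type} [Fintype V]
    (G : SimpleGraph V) : G.labelledCopyCount (cycleGraph 4) ≤ 8 * numC4 G := by
  rw [numC4_eq_copyCount, ← labelledCopyCount_cycleGraph_four_self]
  exact labelledCopyCount_le_mul_copyCount

/-- If a graph `G` on `n` vertices has average degree `d = 2e(G)/n ≥ 2√n`, then `G`
contains at least `d⁴/36` copies of `C₄`. -/
theorem statement_4 (n : ℕ) (G : SimpleGraph (Fin n)) (d : ℝ)
    (hd : d = 2 * (Nat.card G.edgeSet : ℝ) / n)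
    (h : 2 * Real.sqrt n ≤ d) :
    d ^ 4 / 36 ≤ (numC4 G : ℝ) := by
  classical
  rcases n.eq_zero_or_pos with rfl | hn
  · simp [hd] -- `d = 0`, as division by `0` gives `0`
  have hsum : ∑ v, (G.degree v : ℝ) = Fintype.card (Fin n) * d := by
    have hE : Nat.card G.edgeSet = #G.edgeFinset := Nat.card_eq_card_toFinset _
    rw [hd, hE, ← Nat.cast_sum, sum_degrees_eq_twice_card_edges, Fintype.card_fin]
    field_simp
    push_cast
    ring
  have : Nonempty (Fin n) := ⟨⟨0, hn⟩⟩
  have hdn : d ≤ n - 1 := le_of_mul_le_mul_left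
    (by simpa [hsum] using G.sum_degree_le_card_mul_card_sub_one) (Nat.cast_pos.2 hn)
  have h4n : 4 * n ≤ d ^ 2 := by nlinarith [Real.sq_sqrt n.cast_nonneg, Real.sqrt_nonneg n]
  have hd4 : 4 ≤ d := by nlinarith [Real.sqrt_nonneg n] -- `d² ≥ 4n ≥ 4(d + 1)`
  have hC4 := G.sub_mul_le_labelledCopyCount_cycleGraph_four hsum
    (by rw [Fintype.card_fin]; nlinarith)
  have h8 : (G.labelledCopyCount (cycleGraph 4) : ℝ) ≤ 8 * numC4 G := mod_cast
    labelledCopyCount_cycleGraph_four_le_eight_mul_numC4 G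
  rw [Fintype.card_fin] at hC4
  calc d ^ 4 / 36 ≤ (d ^ 2 - d) * (3 * d ^ 2 / 4 - d) / 8 := by
        have hq : 0 ≤ 19 * d ^ 2 / 36 - 7 * d / 4 + 1 := by nlinarith
        nlinarith [mul_nonneg (sq_nonneg d) hq]
    _ ≤ ((d ^ 2 - d) ^ 2 - n * (d ^ 2 - d)) / 8 := by
        gcongr
        nlinarith
    _ ≤ numC4 G := by linarith
end

section
/- Let G be a graph on n vertices containing at most 4n²/9 copies of the 4-cycle C₄, and let d_n, d_{n-1}, ..., d_1 be a min-degree sequence of G. Then d_i ≤ 2√n for every i ∈ [n]. -/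
/-!
Suppose `d_i > 2√n` and let `S` be the vertex set of `G_i`, so that every vertex has at least
`δ = d_i` neighbours in `S`. Counting paths of length two, the codegrees `c(x, y)` of the ordered
pairs `x ≠ y` in `S` sum to at least `|S| δ (δ - 1)`, and Cauchy–Schwarz turns this
into `∑ c (c - 1) ≥ δ (δ - 1) (δ (δ - 1) - |S| + 1)`. The left-hand side counts labelled
4-cycles, and each copy of `C₄` carries at most 8 labellings, so it is at most `8 · 4n²/9`;
for `δ > 2√n` and `|S| ≤ n` the right-hand side is larger.
-/

open SimpleGraph Finset

/-- The degree of `u` restricted to the vertex set `S`: the number of neighbors of `u`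
lying in `S` (which is the degree of `u` in the induced subgraph `G[S]` when `u ∈ S`). -/
noncomputable def degIn {V : Type} (G : SimpleGraph V) (S : Finset V) (u : V) : ℕ :=
  Nat.card {w : V // w ∈ S ∧ G.Adj u w}

lemma degIn_eq_card_filter {V : Type} (G : SimpleGraph V) [DecidableRel G.Adj] (S : Finset V)
    (u : V) : degIn G S u = #{w ∈ S | G.Adj u w} := by
  rw [degIn, ← Nat.card_eq_finsetCard]
  exact Nat.card_congr (Equiv.subtypeEquivRight fun _ => mem_filter.symm)

lemma Finset.cast_card_offDiag {α R : Type*} [Ring R] (s : Finset α) :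
    (#s.offDiag : R) = #s * (#s - 1) := by
  rw [offDiag_card, Nat.cast_sub (Nat.le_mul_self _), Nat.cast_mul, mul_sub_one]

lemma mul_sub_add_one_le_sum_mul_sub_one {ι 𝕜 : Type*} [Field 𝕜] [LinearOrder 𝕜]
    [IsStrictOrderedRing 𝕜] (s : Finset ι) (x : ι → 𝕜) {m X : 𝕜} (hm : 0 < m)
    (hs : (#s : 𝕜) = m * (m - 1)) (hmX : m - 1 ≤ X) (hsum : m * X ≤ ∑ i ∈ s, x i) :
    X * (X - m + 1) ≤ ∑ i ∈ s, x i * (x i - 1) := by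
  have hm1 : 1 ≤ m := by nlinarith [(Nat.cast_nonneg #s : (0 : 𝕜) ≤ #s)]
  have hcs : (∑ i ∈ s, x i) ^ 2 ≤ m * (m - 1) * ∑ i ∈ s, x i ^ 2 :=
    hs ▸ sq_sum_le_card_mul_sum_sq
  have hsplit : ∑ i ∈ s, x i * (x i - 1) = ∑ i ∈ s, x i ^ 2 - ∑ i ∈ s, x i := by
    rw [← sum_sub_distrib]
    exact sum_congr rfl fun i _ => by ring
  rw [hsplit]
  set R := ∑ i ∈ s, x i
  set T := ∑ i ∈ s, x i ^ 2
  -- `R ↦ R² - m(m-1)R` is increasing for `R ≥ m(m-1)/2`, and `R ≥ mX ≥ m(m-1)`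
  have key : m ^ 2 * (X * (X - m + 1)) ≤ m * (m - 1) * (T - R) := by
    nlinarith [mul_nonneg (sub_nonneg.2 hsum)
      (show 0 ≤ R + m * X - m * (m - 1) by nlinarith)]
  have hLHS : 0 ≤ m ^ 2 * (X * (X - m + 1)) :=
    mul_nonneg (sq_nonneg m) (mul_nonneg (by linarith) (by linarith))
  rcases hm1.eq_or_lt with rfl | hm1
  · have hs0 : s = ∅ :=
      card_eq_zero.1 (by exact_mod_cast hs.trans (by ring : (1 : 𝕜) * (1 - 1) = 0))
    simp only [R, T, hs0, sum_empty] at key ⊢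
    nlinarith
  · have hP : 0 < m * (m - 1) := by nlinarith
    have hTR : 0 ≤ T - R := by nlinarith
    have : m ^ 2 * (X * (X - m + 1)) ≤ m ^ 2 * (T - R) := key.trans (by nlinarith)
    exact le_of_mul_le_mul_left this (by positivity)

lemma thirtyTwo_div_nine_mul_sq_lt {n d m : ℝ} (hn : 1 ≤ n) (hd : 2 * √n < d) (hm : m ≤ n) :
    32 * n ^ 2 / 9 < d * (d - 1) * (d * (d - 1) - m + 1) := by
  obtain ⟨s, hs, rfl⟩ : ∃ s, 1 ≤ s ∧ n = s ^ 2 :=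
    ⟨√n, Real.one_le_sqrt.2 hn, (Real.sq_sqrt (by linarith)).symm⟩
  rw [Real.sqrt_sq (by linarith)] at hd
  have hX : 4 * s ^ 2 - 2 * s < d * (d - 1) := by nlinarith
  have hpoly : 32 * (s ^ 2) ^ 2 / 9 ≤ (4 * s ^ 2 - 2 * s) * (3 * s ^ 2 - 2 * s + 1) := by
    nlinarith [mul_nonneg (sub_nonneg.2 hs) (sq_nonneg (s - 1)), sq_nonneg (s - 1),
      mul_nonneg (mul_nonneg (sub_nonneg.2 hs) (sub_nonneg.2 hs)) (sq_nonneg s)]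
  calc 32 * (s ^ 2) ^ 2 / 9 ≤ (4 * s ^ 2 - 2 * s) * (3 * s ^ 2 - 2 * s + 1) := hpoly
    _ < d * (d - 1) * (d * (d - 1) - s ^ 2 + 1) :=
      mul_lt_mul'' hX (by linarith) (by nlinarith) (by nlinarith)
    _ ≤ d * (d - 1) * (d * (d - 1) - m + 1) :=
      mul_le_mul_of_nonneg_left (by linarith) (by nlinarith)

namespace SimpleGraph

section Copy

variable {V W : Type*} {G : SimpleGraph V} {A : SimpleGraph W}

lemma Copy.toSubgraph_adj_iff (f : Copy A G) (x y : V) :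
    f.toSubgraph.Adj x y ↔ ∃ a b, A.Adj a b ∧ f a = x ∧ f b = y := by
  simp [Subgraph.map_adj, Relation.Map]

lemma Copy.toSubgraph_adj_apply_iff (f : Copy A G) (a : W) (y : V) :
    f.toSubgraph.Adj (f a) y ↔ ∃ b, A.Adj a b ∧ f b = y := by
  rw [toSubgraph_adj_iff]
  exact ⟨fun ⟨a', b, hab, ha, hb⟩ => ⟨b, f.injective ha ▸ hab, hb⟩,
    fun ⟨b, hab, hb⟩ => ⟨a, b, hab, rfl, hb⟩⟩

lemma Copy.exists_adj_apply_eq_of_toSubgraph_eq {f g : Copy A G}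
    (h : f.toSubgraph = g.toSubgraph) {a b : W} (ha : f a = g a) (hab : A.Adj a b) :
    ∃ c, A.Adj a c ∧ f c = g b := by
  rw [← toSubgraph_adj_apply_iff, ha, h, toSubgraph_adj_apply_iff]
  exact ⟨b, hab, rfl⟩

lemma Copy.eq_of_toSubgraph_eq_of_apply_eq {f g : Copy (cycleGraph 4) G}
    (h : f.toSubgraph = g.toSubgraph) (h0 : f 0 = g 0) (h1 : f 1 = g 1) : f = g := by
  have h2 : f 2 = g 2 := by
    obtain ⟨c, hc, hfc⟩ := exists_adj_apply_eq_of_toSubgraph_eq h h1 (b := 2) (by decide)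
    fin_cases c
    · exact absurd (h0.symm.trans hfc) (g.injective.ne (by decide : (0 : Fin 4) ≠ 2))
    all_goals first | exact hfc | exact absurd hc (by decide)
  have h3 : f 3 = g 3 := by
    obtain ⟨c, hc, hfc⟩ := exists_adj_apply_eq_of_toSubgraph_eq h h0 (b := 3) (by decide)
    fin_cases c
    · exact absurd hc (by decide)
    · exact absurd (h1.symm.trans hfc) (g.injective.ne (by decide : (1 : Fin 4) ≠ 3))
    all_goals first | exact hfc | exact absurd hc (by decide)
  ext i
  fin_cases i <;> assumption

-- `g ↦ (g 0, g 1)` is injective on the fibre and lands in the 8 darts of the common subgraph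
lemma Copy.card_toSubgraph_fiber_le [DecidableEq V] [DecidableEq G.Subgraph]
    [Fintype (Copy (cycleGraph 4) G)] (f : Copy (cycleGraph 4) G) :
    #{g : Copy (cycleGraph 4) G | g.toSubgraph = f.toSubgraph} ≤ 8 := by
  let darts : Finset (Fin 4 × Fin 4) := {p | (cycleGraph 4).Adj p.1 p.2}
  calc _ ≤ #(darts.image fun p => (f p.1, f p.2)) := by
        refine card_le_card_of_injOn (fun g => (g 0, g 1)) (fun g hg => ?_) ?_
        · have hadj : g.toSubgraph.Adj (g 0) (g 1) :=
            (g.toSubgraph_adj_apply_iff 0 (g 1)).2 ⟨1, by decide, rfl⟩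
          rw [(mem_filter.1 hg).2, toSubgraph_adj_iff] at hadj
          obtain ⟨a, b, hab, ha, hb⟩ := hadj
          exact mem_image.2 ⟨(a, b), mem_filter.2 ⟨mem_univ _, hab⟩, by rw [ha, hb]⟩
        · intro g hg g' hg' hgg'
          simp only [Prod.mk.injEq] at hgg'
          exact eq_of_toSubgraph_eq_of_apply_eq
            ((mem_filter.1 hg).2.trans (mem_filter.1 hg').2.symm) hgg'.1 hgg'.2
    _ ≤ #darts := card_image_le
    _ = 8 := by decide

lemma labelledCopyCount_eq_card_univ [Fintype V] [Fintype W] [Fintype (Copy A G)] :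
    G.labelledCopyCount A = #(univ : Finset (Copy A G)) := by
  rw [labelledCopyCount, card_univ]
  convert rfl

lemma exists_copy_cycleGraph_four {a b c d : V} (hab : G.Adj a b) (hbc : G.Adj b c)
    (hcd : G.Adj c d) (hda : G.Adj d a) (hac : a ≠ c) (hbd : b ≠ d) :
    ∃ f : Copy (cycleGraph 4) G, f 0 = a ∧ f 1 = b ∧ f 2 = c ∧ f 3 = d := by
  have hinj : Function.Injective ![a, b, c, d] := by
    have := hab.ne; have := hbc.ne; have := hcd.ne; have := hda.ne
    intro i j hij
    fin_cases i <;> fin_cases j <;>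
      first | rfl | exact absurd hij ‹_› | exact absurd hij.symm ‹_›
  refine ⟨⟨⟨![a, b, c, d], fun {i j} hij => ?_⟩, hinj⟩, rfl, rfl, rfl, rfl⟩
  fin_cases i <;> fin_cases j <;> first
    | exact absurd hij (by decide)
    | simp [hab, hbc, hcd, hda, hab.symm, hbc.symm, hcd.symm, hda.symm]

end Copy

section Counting

variable {V : Type*} (G : SimpleGraph V) [DecidableRel G.Adj]

lemma sum_card_offDiag_neighbors_eq (S : Finset V) :
    ∑ w ∈ S, #{x ∈ S | G.Adj w x}.offDiag =
      ∑ p ∈ S.offDiag, #{w ∈ S | G.Adj w p.1 ∧ G.Adj w p.2} := by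
  have h : ∀ w, {x ∈ S | G.Adj w x}.offDiag =
      S.offDiag.bipartiteAbove (fun w p => G.Adj w p.1 ∧ G.Adj w p.2) w := by
    intro w
    ext p
    simp only [mem_offDiag, mem_filter, mem_bipartiteAbove]
    tauto
  simp_rw [h]
  exact sum_card_bipartiteAbove_eq_sum_card_bipartiteBelow _

lemma sum_card_offDiag_commonNeighbors_le [Fintype V] (S : Finset V) :
    ∑ p ∈ S.offDiag, #{w ∈ S | G.Adj w p.1 ∧ G.Adj w p.2}.offDiag ≤
      G.labelledCopyCount (cycleGraph 4) := by
  classical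
  rw [← card_sigma, labelledCopyCount_eq_card_univ]
  refine card_le_card_of_surjOn (fun f => ⟨(f 0, f 2), (f 1, f 3)⟩) ?_
  rintro ⟨⟨a, c⟩, b, d⟩ h
  simp only [coe_sigma, Set.mem_sigma_iff, mem_coe, mem_offDiag, mem_filter] at h
  obtain ⟨⟨-, -, hac⟩, ⟨-, hba, hbc⟩, ⟨-, hda, hdc⟩, hbd⟩ := h
  obtain ⟨f, rfl, rfl, rfl, rfl⟩ :=
    exists_copy_cycleGraph_four hba.symm hbc hdc.symm hda hac hbd
  exact ⟨f, mem_coe.2 (mem_univ f), rfl⟩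

end Counting

variable {V : Type} [Fintype V] (G : SimpleGraph V)

lemma labelledCopyCount_cycleGraph_four_le :
    G.labelledCopyCount (cycleGraph 4) ≤ 8 * numC4 G := by
  classical
  calc G.labelledCopyCount (cycleGraph 4) = #(univ : Finset (Copy (cycleGraph 4) G)) :=
        labelledCopyCount_eq_card_univ
    _ ≤ 8 * #(univ.image Copy.toSubgraph) := card_le_mul_card_image _ _ fun H hH => by
        obtain ⟨f, -, rfl⟩ := mem_image.1 hH
        exact f.card_toSubgraph_fiber_le
    _ ≤ 8 * numC4 G := by
        rw [numC4, Nat.card_eq_fintype_card, Fintype.card_subtype]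
        gcongr
        intro H hH
        obtain ⟨f, -, rfl⟩ := mem_image.1 hH
        exact mem_filter.2 ⟨mem_univ _, ⟨f.isoToSubgraph.symm⟩⟩

lemma mul_sub_le_eight_mul_numC4 [DecidableRel G.Adj] (S : Finset V) (hS : S.Nonempty) {δ : ℕ}
    (hδ : ∀ w ∈ S, δ ≤ #{x ∈ S | G.Adj w x}) :
    (δ * (δ - 1) : ℝ) * (δ * (δ - 1) - #S + 1) ≤ 8 * numC4 G := by
  have hX : (0 : ℝ) ≤ δ * (δ - 1) := Nat.cast_descFactorial_two ℝ δ ▸ Nat.cast_nonneg _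
  have hpaths : (#S : ℝ) * (δ * (δ - 1)) ≤
      ∑ p ∈ S.offDiag, (#{w ∈ S | G.Adj w p.1 ∧ G.Adj w p.2} : ℝ) := by
    rw [← Nat.cast_sum, ← sum_card_offDiag_neighbors_eq, ← nsmul_eq_mul, ← sum_const,
      Nat.cast_sum]
    gcongr with w hw
    rw [cast_card_offDiag, ← Nat.cast_descFactorial_two, ← Nat.cast_descFactorial_two]
    exact_mod_cast Nat.descFactorial_le 2 (hδ w hw)
  have hC4 : ∑ p ∈ S.offDiag, (#{w ∈ S | G.Adj w p.1 ∧ G.Adj w p.2} : ℝ) *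
      (#{w ∈ S | G.Adj w p.1 ∧ G.Adj w p.2} - 1) ≤ 8 * numC4 G := by
    simp_rw [← cast_card_offDiag]
    exact_mod_cast (G.sum_card_offDiag_commonNeighbors_le S).trans
      G.labelledCopyCount_cycleGraph_four_le
  by_cases hSX : (#S : ℝ) - 1 ≤ δ * (δ - 1)
  · exact (mul_sub_add_one_le_sum_mul_sub_one _ _ (by exact_mod_cast hS.card_pos)
      (cast_card_offDiag S) hSX hpaths).trans hC4
  · exact (mul_nonpos_of_nonneg_of_nonpos hX (by linarith)).trans (by positivity)

end SimpleGraph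

/-- Let `G` be a graph on `n` vertices containing at most `4n²/9` copies of `C₄`, and let
`v` be a min-degree ordering of `G` (indexed so that `v i` is a vertex of minimum degree in
the induced subgraph `G_i = G[{v j : j ≤ i}]`).  Then every term `d_i` of the min-degree
sequence satisfies `d_i ≤ 2√n`. -/
theorem statement_5 (n : ℕ) (G : SimpleGraph (Fin n))
    (hG : (numC4 G : ℝ) ≤ 4 * (n : ℝ) ^ 2 / 9)
    (v : Fin n ≃ Fin n)
    (hmin : ∀ i : Fin n, ∀ u ∈ (Finset.Iic i).image ⇑v,
      degIn G ((Finset.Iic i).image ⇑v) (v i) ≤ degIn G ((Finset.Iic i).image ⇑v) u) :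
    ∀ i : Fin n, (degIn G ((Finset.Iic i).image ⇑v) (v i) : ℝ) ≤ 2 * Real.sqrt n := by
  classical
  intro i
  set S := (Iic i).image v
  have hS : S.Nonempty := ⟨v i, mem_image_of_mem _ (mem_Iic.2 le_rfl)⟩
  have hcount := G.mul_sub_le_eight_mul_numC4 S hS fun w hw =>
    degIn_eq_card_filter G S w ▸ hmin i w hw
  have hn : (1 : ℝ) ≤ n := by exact_mod_cast i.pos
  have hSn : (#S : ℝ) ≤ n := by exact_mod_cast (card_le_univ S).trans_eq (Fintype.card_fin n)
  by_contra! hd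
  linarith [thirtyTwo_div_nine_mul_sq_lt hn hd hSn]
end

section
/- Let n > m ≥ d ≥ 8 be integers and let F be an m-vertex graph with minimum degree at least d-1. Then for every J ⊆ V(F) with |J| ≥ 4n/d, we have e(F²[J]) ≥ d²|J|²/(4n). -/
/-- The number of neighbors of a vertex (its degree). -/
noncomputable def ndeg {V : Type} (G : SimpleGraph V) (v : V) : ℕ :=
  Nat.card ↥(G.neighborSet v)

/-- `e(F²[J])`: the number of edges, counted with multiplicity, of the multigraph `F²`
(in which the multiplicity of a pair `uv` is the number of common neighbors of `u` and `v`)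
induced on `J`; it equals half the sum over ordered pairs of distinct vertices of `J`. -/
noncomputable def eSquare {V : Type} [DecidableEq V] (F : SimpleGraph V) (J : Finset V) : ℝ :=
  (∑ p ∈ J.offDiag, (Nat.card ↥(F.neighborSet p.1 ∩ F.neighborSet p.2) : ℝ)) / 2

private lemma cast_mul_sub_self (t : ℕ) : ((t * t - t : ℕ) : ℝ) = (t : ℝ) ^ 2 - t := by
  cases t with
  | zero => simp
  | succ k =>
    rw [Nat.cast_sub (Nat.le_mul_of_pos_left _ k.succ_pos)]
    push_cast; ring

set_option maxHeartbeats 1000000 in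
/-- Let `n > m ≥ d ≥ 8` and let `F` be an `m`-vertex graph with minimum degree at least
`d - 1`.  Then for every `J ⊆ V(F)` with `|J| ≥ 4n/d` we have `e(F²[J]) ≥ d²|J|²/(4n)`. -/
theorem statement_6 (n m d : ℕ) (hd : 8 ≤ d) (hdm : d ≤ m) (hmn : m < n)
    (F : SimpleGraph (Fin m))
    (hmin : ∀ w, d - 1 ≤ ndeg F w) :
    ∀ J : Finset (Fin m), 4 * (n : ℝ) / d ≤ (J.card : ℝ) →
      (d : ℝ) ^ 2 * (J.card : ℝ) ^ 2 / (4 * n) ≤ eSquare F J := by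
  classical
  intro J hJ
  set t : Fin m → ℕ := fun w => (J.filter fun u => F.Adj u w).card with ht
  -- rewrite the Nat.card of common neighborhoods as a filter card
  have hcard : ∀ u v : Fin m, Nat.card ↥(F.neighborSet u ∩ F.neighborSet v)
      = (Finset.univ.filter fun w => F.Adj u w ∧ F.Adj v w).card := by
    intro u v
    rw [Nat.card_coe_set_eq, ← Set.ncard_coe_finset]
    congr 1
    ext w
    simp [SimpleGraph.mem_neighborSet]
  -- the double counting identity
  have key : ∑ p ∈ J.offDiag, (Finset.univ.filter fun w => F.Adj p.1 w ∧ F.Adj p.2 w).card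
      = ∑ w : Fin m, (t w * t w - t w) := by
    calc ∑ p ∈ J.offDiag, (Finset.univ.filter fun w => F.Adj p.1 w ∧ F.Adj p.2 w).card
        = ∑ p ∈ J.offDiag, ∑ w : Fin m, if F.Adj p.1 w ∧ F.Adj p.2 w then 1 else 0 :=
          Finset.sum_congr rfl fun p _ => Finset.card_filter _ _
      _ = ∑ w : Fin m, ∑ p ∈ J.offDiag, if F.Adj p.1 w ∧ F.Adj p.2 w then 1 else 0 :=
          Finset.sum_comm
      _ = ∑ w : Fin m, (J.offDiag.filter fun p => F.Adj p.1 w ∧ F.Adj p.2 w).card :=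
          Finset.sum_congr rfl fun w _ => (Finset.card_filter _ _).symm
      _ = ∑ w : Fin m, (t w * t w - t w) := by
          refine Finset.sum_congr rfl fun w _ => ?_
          show _ = t w * t w - t w
          rw [ht]
          rw [← Finset.offDiag_card]
          congr 1
          ext p
          simp only [Finset.mem_filter, Finset.mem_offDiag]
          constructor
          · rintro ⟨⟨h1, h2, h3⟩, h4, h5⟩
            exact ⟨⟨h1, h4⟩, ⟨h2, h5⟩, h3⟩
          · rintro ⟨⟨h1, h4⟩, ⟨h2, h5⟩, h3⟩
            exact ⟨⟨h1, h2, h3⟩, h4, h5⟩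
  -- degree sum identity
  have hdeg : ∀ u : Fin m, ndeg F u = (Finset.univ.filter fun w => F.Adj u w).card := by
    intro u
    rw [ndeg, Nat.card_coe_set_eq, ← Set.ncard_coe_finset]
    congr 1
    ext w
    simp [SimpleGraph.mem_neighborSet]
  have hsum : ∑ w : Fin m, t w = ∑ u ∈ J, ndeg F u := by
    calc ∑ w : Fin m, t w
        = ∑ w : Fin m, ∑ u ∈ J, if F.Adj u w then 1 else 0 :=
          Finset.sum_congr rfl fun w _ => Finset.card_filter _ _
      _ = ∑ u ∈ J, ∑ w : Fin m, if F.Adj u w then 1 else 0 := Finset.sum_comm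
      _ = ∑ u ∈ J, ndeg F u := by
          refine Finset.sum_congr rfl fun u _ => ?_
          rw [hdeg u, Finset.card_filter]
  have hSnat : J.card * (d - 1) ≤ ∑ w : Fin m, t w := by
    rw [hsum]
    calc J.card * (d - 1) = ∑ _u ∈ J, (d - 1) := by rw [Finset.sum_const, smul_eq_mul]
      _ ≤ ∑ u ∈ J, ndeg F u := Finset.sum_le_sum fun u _ => hmin u
  -- move to reals
  set S : ℝ := ∑ w : Fin m, (t w : ℝ) with hS
  set T : ℝ := ∑ w : Fin m, (t w : ℝ) ^ 2 with hT
  have hES : eSquare F J = (T - S) / 2 := by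
    rw [eSquare]
    congr 1
    calc (∑ p ∈ J.offDiag, (Nat.card ↥(F.neighborSet p.1 ∩ F.neighborSet p.2) : ℝ))
        = ∑ p ∈ J.offDiag,
            ((Finset.univ.filter fun w => F.Adj p.1 w ∧ F.Adj p.2 w).card : ℝ) := by
          refine Finset.sum_congr rfl fun p _ => ?_
          rw [hcard]
      _ = ((∑ p ∈ J.offDiag,
            (Finset.univ.filter fun w => F.Adj p.1 w ∧ F.Adj p.2 w).card : ℕ) : ℝ) :=
          (Nat.cast_sum _ _).symm
      _ = ((∑ w : Fin m, (t w * t w - t w) : ℕ) : ℝ) := by rw [key]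
      _ = ∑ w : Fin m, ((t w * t w - t w : ℕ) : ℝ) := Nat.cast_sum _ _
      _ = ∑ w : Fin m, ((t w : ℝ) ^ 2 - (t w : ℝ)) :=
          Finset.sum_congr rfl fun w _ => cast_mul_sub_self (t w)
      _ = T - S := by rw [hT, hS, Finset.sum_sub_distrib]
  have hCS : S ^ 2 ≤ (m : ℝ) * T := by
    have h := sq_sum_le_card_mul_sum_sq (s := (Finset.univ : Finset (Fin m)))
      (f := fun w => (t w : ℝ))
    simpa [hS, hT] using h
  -- cast degree bound
  have h1d : (1 : ℕ) ≤ d := by omega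
  have hSA : (J.card : ℝ) * ((d : ℝ) - 1) ≤ S := by
    have h : ((J.card * (d - 1) : ℕ) : ℝ) ≤ ((∑ w : Fin m, t w : ℕ) : ℝ) :=
      Nat.cast_le.mpr hSnat
    push_cast [Nat.cast_sub h1d] at h
    simpa [hS] using h
  set Jc : ℝ := (J.card : ℝ) with hJc
  set A : ℝ := Jc * ((d : ℝ) - 1) with hA
  have hdR : (8 : ℝ) ≤ (d : ℝ) := by exact_mod_cast hd
  have hmR : (d : ℝ) ≤ (m : ℝ) := by exact_mod_cast hdm
  have hnR : (m : ℝ) < (n : ℝ) := by exact_mod_cast hmn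
  have hm0 : (0 : ℝ) < m := by linarith
  have hn0 : (0 : ℝ) < n := by linarith
  have hd0 : (0 : ℝ) < d := by linarith
  have hJ' : 4 * (n : ℝ) ≤ d * Jc := by
    rw [div_le_iff₀ hd0] at hJ
    linarith [hJ]
  have hJc0 : (0 : ℝ) ≤ Jc := by
    rw [hJc]; positivity
  have hA0 : (0 : ℝ) ≤ A := by
    rw [hA]; nlinarith
  have hdm1 : (0 : ℝ) ≤ (d : ℝ) - 1 := by linarith
  have h1 : 4 * (n : ℝ) * ((d : ℝ) - 1) ≤ d * Jc * ((d : ℝ) - 1) :=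
    mul_le_mul_of_nonneg_right hJ' hdm1
  -- A ≥ m
  have hml : (m : ℝ) * ((d : ℝ) - 1) ≤ (n : ℝ) * ((d : ℝ) - 1) :=
    mul_le_mul_of_nonneg_right hnR.le hdm1
  have hdm' : (d : ℝ) * m ≤ (d : ℝ) * (Jc * ((d : ℝ) - 1)) := by
    nlinarith [h1, hml, mul_nonneg hm0.le (by linarith : (0:ℝ) ≤ 3 * (d:ℝ) - 4)]
  have hAm : (m : ℝ) ≤ A := by
    rw [hA]; exact le_of_mul_le_mul_left hdm' hd0
  have hSA' : A ≤ S := by rw [hA]; exact hSA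
  have h3 : A ^ 2 - A * m ≤ (m : ℝ) * (T - S) := by
    nlinarith [hCS, mul_nonneg (sub_nonneg.mpr hSA') (by linarith : (0:ℝ) ≤ S + A - m)]
  have hTS0 : (0 : ℝ) ≤ T - S := by
    nlinarith [h3, mul_nonneg hA0 (sub_nonneg.mpr hAm), hm0]
  have h4 : A ^ 2 - A * n ≤ (n : ℝ) * (T - S) := by
    nlinarith [h3, mul_nonneg hTS0 (by linarith : (0:ℝ) ≤ (n:ℝ) - m),
      mul_nonneg hA0 (by linarith : (0:ℝ) ≤ (n:ℝ) - m)]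
  have h5 : A * (4 * (n : ℝ)) ≤ A * (d * Jc) := mul_le_mul_of_nonneg_left hJ' hA0
  have hc : (0 : ℝ) ≤ (d : ℝ) ^ 2 - 7 * d + 4 := by nlinarith
  have h6 : 2 * (d : ℝ) ^ 2 * Jc ^ 2 ≤ 4 * A ^ 2 - A * (d * Jc) := by
    have hq : (0 : ℝ) ≤ Jc ^ 2 * ((d : ℝ) ^ 2 - 7 * d + 4) := by positivity
    rw [hA]; nlinarith [hq]
  rw [hES, div_le_div_iff₀ (by positivity) (by norm_num)]
  nlinarith [h4, h5, h6]
end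

section
/- There exists n₀ such that for all integers n ≥ n₀ the following holds, where b = 16 log⁴ n and g = 32 log⁵ n. Let m and d be integers with m ≤ n-1 and √n/log n ≤ d ≤ 2√n, and let F be an m-vertex graph with minimum degree at least d-1 such that |N_F(u) ∩ N_F(v)| ≤ √n/b for all distinct u, v ∈ V(F). Then there exists a function C mapping subsets of V(F) to subsets of V(F) such that for every set I ⊆ V(F) of size d satisfying e(F²[I]) ≤ n/g, there exists a set T with T ⊆ I ⊆ C(T), |T| ≤ 2√n/log n, and |C(T)| ≤ 5n/d. -/
/-!
The container of `T` is produced by a greedy process with the codegree weights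
`w u v = |N(u) ∩ N(v)|` and threshold `c = √n / b`. While more than `K = ⌊4n/d⌋` vertices are
available, take an available vertex `v` of maximal weighted degree into the available set `A`.
If `v` lies in the decision set it joins the set `P` of picked vertices, and every available
vertex whose weighted degree into `P` exceeds `c` is discarded; otherwise only `v` is discarded.

The run for `I` consults `I` only at the vertices it takes, so the run for
`T = I \ A_final(I)` is the same run, and `I ⊆ T ∪ A_final(T) =: C(T)`. A vertex of `T` is either
picked or has `F²`-degree more than `c` in `I`; by Markov there are at most
`2 e(F²[I]) / c ≤ √n / log n` of the latter. The potential `∑_{u ∈ A} (2c - deg_P u)` lies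
between `c |A|` and `2c |A|`, and a pick lowers it by the degree of `v` in `A`, which is at least
`(d-1)² |A| / 2n` by Cauchy–Schwarz and the minimum degree. Hence each pick shrinks the potential
by a factor `exp (-ρ)`; since it still exceeds `c K` at the last pick, there are at most
`1 + log √n / ρ ≤ √n / log n` picks.
-/

open Finset Real Filter

namespace GreedyContainer

variable {V : Type*} [DecidableEq V]

def wdeg (w : V → V → ℝ) (P : Finset V) (u : V) : ℝ :=
  ∑ v ∈ P.erase u, w u v

lemma wdeg_nonneg {w : V → V → ℝ} (hw : ∀ u v, 0 ≤ w u v) (P : Finset V) (u : V) :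
    0 ≤ wdeg w P u :=
  sum_nonneg fun _ _ => hw _ _

lemma wdeg_mono {w : V → V → ℝ} (hw : ∀ u v, 0 ≤ w u v) {P Q : Finset V} (h : P ⊆ Q)
    (u : V) : wdeg w P u ≤ wdeg w Q u :=
  sum_le_sum_of_subset_of_nonneg (erase_subset_erase _ h) fun _ _ _ => hw _ _

lemma wdeg_insert (w : V → V → ℝ) {P : Finset V} {u v : V} (huv : u ≠ v) (hv : v ∉ P) :
    wdeg w (insert v P) u = wdeg w P u + w u v := by
  rw [wdeg, erase_insert_of_ne huv.symm, sum_insert fun h => hv (mem_of_mem_erase h), wdeg,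
    add_comm]

lemma wdeg_empty (w : V → V → ℝ) (u : V) : wdeg w ∅ u = 0 := by
  simp [wdeg]

noncomputable def maxWdegVertex (w : V → V → ℝ) (A : Finset V) (hA : A.Nonempty) : V :=
  (A.exists_max_image (wdeg w A) hA).choose

lemma maxWdegVertex_mem (w : V → V → ℝ) {A : Finset V} (hA : A.Nonempty) :
    maxWdegVertex w A hA ∈ A :=
  (A.exists_max_image (wdeg w A) hA).choose_spec.1

lemma wdeg_le_wdeg_maxWdegVertex (w : V → V → ℝ) {A : Finset V} (hA : A.Nonempty) {x : V}
    (hx : x ∈ A) : wdeg w A x ≤ wdeg w A (maxWdegVertex w A hA) :=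
  (A.exists_max_image (wdeg w A) hA).choose_spec.2 x hx

variable (V) in
structure State where
  avail : Finset V
  picked : Finset V

variable (w : V → V → ℝ) (K : ℕ) (c : ℝ)

noncomputable def pick (s : State V) (h : K < #s.avail) : V :=
  maxWdegVertex w s.avail (card_pos.1 (K.zero_le.trans_lt h))

noncomputable def step (S : Finset V) (s : State V) : State V :=
  if h : K < #s.avail then
    if pick w K s h ∈ S then
      ⟨{u ∈ s.avail.erase (pick w K s h) | wdeg w (insert (pick w K s h) s.picked) u ≤ c},
        insert (pick w K s h) s.picked⟩
    else ⟨s.avail.erase (pick w K s h), s.picked⟩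
  else s

noncomputable def run [Fintype V] (S : Finset V) : ℕ → State V
  | 0 => ⟨univ, ∅⟩
  | k + 1 => step w K c S (run S k)

variable {w K c}

lemma pick_mem_avail {s : State V} (h : K < #s.avail) : pick w K s h ∈ s.avail :=
  maxWdegVertex_mem _ _

lemma step_avail_subset (S : Finset V) (s : State V) : (step w K c S s).avail ⊆ s.avail := by
  unfold step
  split_ifs
  · exact (filter_subset _ _).trans (erase_subset _ _)
  · exact erase_subset _ _
  · exact Subset.rfl

lemma picked_subset_step (S : Finset V) (s : State V) : s.picked ⊆ (step w K c S s).picked := by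
  unfold step
  split_ifs
  · exact subset_insert _ _
  all_goals exact Subset.rfl

lemma pick_notMem_step_avail (S : Finset V) {s : State V} (h : K < #s.avail) :
    pick w K s h ∉ (step w K c S s).avail := by
  unfold step
  split_ifs
  · exact fun hm => notMem_erase _ _ (mem_of_mem_filter _ hm)
  · exact notMem_erase _ _

lemma card_step_avail_lt (S : Finset V) {s : State V} (h : K < #s.avail) :
    #(step w K c S s).avail < #s.avail :=
  card_lt_card <| ssubset_of_subset_of_ne (step_avail_subset S s) fun he =>
    pick_notMem_step_avail S h (he ▸ pick_mem_avail h)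

lemma step_of_card_le (S : Finset V) {s : State V} (h : #s.avail ≤ K) : step w K c S s = s :=
  dif_neg h.not_gt

lemma step_congr {S S' : Finset V} {s : State V}
    (h : ∀ hK : K < #s.avail, pick w K s hK ∈ S ↔ pick w K s hK ∈ S') :
    step w K c S s = step w K c S' s := by
  unfold step
  split_ifs <;> first | rfl | simp_all

structure State.Valid (w : V → V → ℝ) (c : ℝ) (S : Finset V) (s : State V) : Prop where
  disjoint : Disjoint s.avail s.picked
  picked_subset : s.picked ⊆ S
  wdeg_le : ∀ u ∈ s.avail, wdeg w s.picked u ≤ c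

lemma State.Valid.step {S : Finset V} {s : State V} (hs : s.Valid w c S) :
    (step w K c S s).Valid w c S := by
  unfold GreedyContainer.step
  split_ifs with hK hS
  · refine ⟨?_, insert_subset hS hs.picked_subset, fun u hu => (mem_filter.1 hu).2⟩
    refine disjoint_insert_right.2 ⟨fun hm => ?_, ?_⟩
    · exact notMem_erase _ _ (mem_of_mem_filter _ hm)
    · exact hs.disjoint.mono_left ((filter_subset _ _).trans (erase_subset _ _))
  · exact ⟨hs.disjoint.mono_left (erase_subset _ _), hs.picked_subset,
      fun u hu => hs.wdeg_le u (mem_of_mem_erase hu)⟩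
  · exact hs

lemma run_valid [Fintype V] (hc : 0 ≤ c) (S : Finset V) (k : ℕ) :
    (run w K c S k).Valid w c S := by
  induction k with
  | zero => exact ⟨disjoint_empty_right _, empty_subset _, fun u _ => (wdeg_empty w u).le.trans hc⟩
  | succ k ih => exact ih.step

lemma run_avail_antitone [Fintype V] (S : Finset V) : Antitone fun k => (run w K c S k).avail :=
  antitone_nat_of_succ_le fun _ => step_avail_subset S _

lemma card_run_avail_le [Fintype V] (S : Finset V) :
    #(run w K c S (Fintype.card V)).avail ≤ K := by
  suffices ∀ k, #(run w K c S k).avail ≤ K ∨ #(run w K c S k).avail + k ≤ Fintype.card V by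
    have := this (Fintype.card V); omega
  intro k
  induction k with
  | zero => exact Or.inr (card_le_univ _)
  | succ k ih =>
    rw [run]
    by_cases hK : K < #(run w K c S k).avail
    · have := card_step_avail_lt (w := w) (c := c) S hK
      omega
    · rw [step_of_card_le S (not_lt.1 hK)]
      exact Or.inl (not_lt.1 hK)

lemma run_sdiff_avail [Fintype V] (S : Finset V) {M : ℕ} {k : ℕ} (hk : k ≤ M) :
    run w K c (S \ (run w K c S M).avail) k = run w K c S k := by
  induction k with
  | zero => rfl
  | succ k ih =>
    refine (congrArg _ (ih (by omega))).trans (step_congr fun hK => ?_)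
    have := pick_notMem_step_avail (w := w) (c := c) S hK
    have hM : pick w K _ hK ∉ (run w K c S M).avail := fun hm => this (run_avail_antitone S hk hm)
    simp [hM]

lemma mem_step_picked_or_lt_wdeg {S : Finset V} {s : State V} {u : V} (hu : u ∈ s.avail)
    (huS : u ∈ S) (hu' : u ∉ (step w K c S s).avail) :
    u ∈ (step w K c S s).picked ∨ c < wdeg w (step w K c S s).picked u := by
  unfold step at hu' ⊢
  split_ifs at hu' ⊢ with hK hS
  · by_cases hpu : u = pick w K s hK
    · exact Or.inl (hpu ▸ mem_insert_self _ _)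
    · simp_all
  · obtain rfl : u = pick w K s hK := by simp_all
    exact absurd huS hS
  · exact absurd hu hu'

lemma sdiff_run_avail_subset [Fintype V] (hw : ∀ u v, 0 ≤ w u v) (hc : 0 ≤ c) (I : Finset V)
    (k : ℕ) :
    I \ (run w K c I k).avail ⊆ (run w K c I k).picked ∪ {u ∈ I | c < wdeg w I u} := by
  induction k with
  | zero => simp [run]
  | succ k ih =>
    intro u hu
    obtain ⟨huI, hu'⟩ := mem_sdiff.1 hu
    by_cases huk : u ∈ (run w K c I k).avail
    · rcases mem_step_picked_or_lt_wdeg huk huI hu' with h | h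
      · exact mem_union_left _ h
      · refine mem_union_right _ (mem_filter.2 ⟨huI, h.trans_le (wdeg_mono hw ?_ u)⟩)
        exact (run_valid hc I (k + 1)).picked_subset
    · rcases mem_union.1 (ih (mem_sdiff.2 ⟨huI, huk⟩)) with h | h
      · exact mem_union_left _ (picked_subset_step I _ h)
      · exact mem_union_right _ h

variable (w c) in
def potential (s : State V) : ℝ :=
  ∑ u ∈ s.avail, (2 * c - wdeg w s.picked u)

lemma State.Valid.mul_card_le_potential {S : Finset V} {s : State V} (hs : s.Valid w c S) :
    c * #s.avail ≤ potential w c s := by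
  rw [mul_comm, ← nsmul_eq_mul]
  exact card_nsmul_le_sum _ _ _ fun u hu => by linarith [hs.wdeg_le u hu]

lemma potential_le (hw : ∀ u v, 0 ≤ w u v) (s : State V) :
    potential w c s ≤ 2 * c * #s.avail := by
  rw [mul_comm, ← nsmul_eq_mul]
  exact sum_le_card_nsmul _ _ _ fun u _ => by linarith [wdeg_nonneg hw s.picked u]

/-- A kept vertex `u` loses `w u v` from its term, a discarded one loses its whole term
`2c - wdeg w P u ≥ c ≥ w u v`; by symmetry these losses add up to `wdeg w A v`. -/
lemma sum_filter_insert_le (hc : 0 ≤ c) (hsymm : ∀ u v, w u v = w v u)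
    (hcap : ∀ u v, u ≠ v → w u v ≤ c) {A P : Finset V} {v : V} (hv : v ∈ A) (hvP : v ∉ P)
    (hA : ∀ u ∈ A, wdeg w P u ≤ c) :
    ∑ u ∈ {u ∈ A.erase v | wdeg w (insert v P) u ≤ c}, (2 * c - wdeg w (insert v P) u) ≤
      ∑ u ∈ A, (2 * c - wdeg w P u) - wdeg w A v := by
  have hins : ∀ u ∈ A.erase v, wdeg w (insert v P) u = wdeg w P u + w u v := fun u hu =>
    wdeg_insert w (ne_of_mem_erase hu) hvP
  calc ∑ u ∈ {u ∈ A.erase v | wdeg w (insert v P) u ≤ c}, (2 * c - wdeg w (insert v P) u)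
      ≤ ∑ u ∈ A.erase v, (2 * c - wdeg w (insert v P) u) := by
        refine sum_le_sum_of_subset_of_nonneg (filter_subset _ _) fun u hu _ => ?_
        rw [hins u hu]
        linarith [hA u (mem_of_mem_erase hu), hcap u v (ne_of_mem_erase hu)]
    _ = ∑ u ∈ A.erase v, (2 * c - wdeg w P u) - wdeg w A v := by
        rw [wdeg, ← sum_sub_distrib]
        exact sum_congr rfl fun u hu => by rw [hins u hu, hsymm v u]; ring
    _ ≤ ∑ u ∈ A, (2 * c - wdeg w P u) - wdeg w A v := by
        rw [← sum_erase_add _ _ hv]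
        linarith [hA v hv]

lemma step_picked_eq_or {S : Finset V} {s : State V} (hs : s.Valid w c S) :
    (step w K c S s).picked = s.picked ∨
      K < #s.avail ∧ #(step w K c S s).picked = #s.picked + 1 := by
  unfold step
  split_ifs with hK hS
  · exact Or.inr ⟨hK, card_insert_of_notMem (disjoint_left.1 hs.disjoint (pick_mem_avail hK))⟩
  all_goals exact Or.inl rfl

variable {β : ℝ}

lemma mul_exp_le_of_le_sub {ψ ψ' a : ℝ} (hc : 0 < c) (hβ : 0 ≤ β) (hψ₀ : 0 ≤ ψ)
    (hψ : ψ ≤ 2 * c * a) (h : ψ' ≤ ψ - β * a) : ψ' * exp (β / (2 * c)) ≤ ψ := by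
  have hρ : β / (2 * c) * ψ ≤ β * a := by
    rw [div_mul_eq_mul_div, div_le_iff₀ (by positivity)]
    nlinarith [mul_le_mul_of_nonneg_left hψ hβ]
  calc ψ' * exp (β / (2 * c)) ≤ exp (-(β / (2 * c))) * ψ * exp (β / (2 * c)) := by
        gcongr
        nlinarith [one_sub_le_exp_neg (β / (2 * c))]
    _ = ψ := by rw [mul_right_comm, ← exp_add, neg_add_cancel, exp_zero, one_mul]

/-- A pick lowers the potential `ψ ≤ 2c |A|` by at least `β |A| ≥ ρ ψ`, where `ρ = β / 2c`,
so it multiplies it by at most `1 - ρ ≤ exp (-ρ)`. -/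
lemma potential_mul_exp_step_le (hc : 0 < c) (hβ : 0 ≤ β) (hsymm : ∀ u v, w u v = w v u)
    (hw : ∀ u v, 0 ≤ w u v) (hcap : ∀ u v, u ≠ v → w u v ≤ c)
    (hmax : ∀ A : Finset V, K < #A → ∃ v ∈ A, β * #A ≤ wdeg w A v)
    {S : Finset V} {s : State V} (hs : s.Valid w c S) :
    potential w c (step w K c S s) * exp (β / (2 * c) * #(step w K c S s).picked) ≤
      potential w c s * exp (β / (2 * c) * #s.picked) := by
  have hψ₀ : 0 ≤ potential w c s := hs.mul_card_le_potential.trans' (by positivity)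
  unfold step
  split_ifs with hK hS
  · have hv := pick_mem_avail (w := w) hK
    have hvP := disjoint_left.1 hs.disjoint hv
    obtain ⟨x, hx, hxβ⟩ := hmax _ hK
    have hdecay := mul_exp_le_of_le_sub hc hβ hψ₀ (potential_le hw s)
      ((sum_filter_insert_le hc.le hsymm hcap hv hvP hs.wdeg_le).trans
        (sub_le_sub_left (hxβ.trans (wdeg_le_wdeg_maxWdegVertex w _ hx)) _))
    rw [card_insert_of_notMem hvP, Nat.cast_succ, mul_add, mul_one, exp_add, mul_comm (exp _),
      ← mul_assoc]
    exact mul_le_mul_of_nonneg_right hdecay (exp_pos _).le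
  · gcongr
    unfold potential
    rw [← sum_erase_add _ _ (pick_mem_avail (w := w) hK)]
    linarith [hs.wdeg_le _ (pick_mem_avail (w := w) hK)]
  · exact le_rfl

variable [Fintype V]

lemma potential_mul_exp_run_le (hc : 0 < c) (hβ : 0 ≤ β) (hsymm : ∀ u v, w u v = w v u)
    (hw : ∀ u v, 0 ≤ w u v) (hcap : ∀ u v, u ≠ v → w u v ≤ c)
    (hmax : ∀ A : Finset V, K < #A → ∃ v ∈ A, β * #A ≤ wdeg w A v) (S : Finset V) (k : ℕ) :
    potential w c (run w K c S k) * exp (β / (2 * c) * #(run w K c S k).picked) ≤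
      2 * c * Fintype.card V := by
  induction k with
  | zero => simp [run, potential, wdeg_empty, mul_comm]
  | succ k ih =>
    exact (potential_mul_exp_step_le hc hβ hsymm hw hcap hmax (run_valid hc.le S k)).trans ih

/-- At the step that made the `(p+1)`-st pick, more than `K` vertices were available, so the
potential was at least `c (K + 1)`; on the other hand it had decayed to `2 c |V| exp (-ρ p)`. -/
lemma add_one_mul_exp_le_of_card_picked (hc : 0 < c) (hβ : 0 ≤ β)
    (hsymm : ∀ u v, w u v = w v u) (hw : ∀ u v, 0 ≤ w u v) (hcap : ∀ u v, u ≠ v → w u v ≤ c)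
    (hmax : ∀ A : Finset V, K < #A → ∃ v ∈ A, β * #A ≤ wdeg w A v) (S : Finset V) {k p : ℕ}
    (hp : #(run w K c S k).picked = p + 1) :
    (K + 1) * exp (β / (2 * c) * p) ≤ 2 * Fintype.card V := by
  induction k with
  | zero => simp [run] at hp
  | succ k ih =>
    rw [run] at hp
    rcases step_picked_eq_or (run_valid hc.le S k) with h | ⟨hK, hcard⟩
    · exact ih (h ▸ hp)
    · obtain rfl : #(run w K c S k).picked = p := by omega
      have hK' : (K + 1 : ℝ) ≤ #(run w K c S k).avail := by exact_mod_cast hK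
      refine le_of_mul_le_mul_left ?_ hc
      calc c * ((K + 1) * exp (β / (2 * c) * #(run w K c S k).picked))
          = c * (K + 1) * exp (β / (2 * c) * #(run w K c S k).picked) := by ring
        _ ≤ potential w c (run w K c S k) * exp (β / (2 * c) * #(run w K c S k).picked) := by
          gcongr
          exact (mul_le_mul_of_nonneg_left hK' hc.le).trans
            (run_valid hc.le S k).mul_card_le_potential
        _ ≤ c * (2 * Fintype.card V) := by
          linarith [potential_mul_exp_run_le hc hβ hsymm hw hcap hmax S k]

variable (w K c) in
noncomputable def container (T : Finset V) : Finset V :=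
  T ∪ (run w K c T (Fintype.card V)).avail

variable (w K c) in
noncomputable def fingerprint (I : Finset V) : Finset V :=
  I \ (run w K c I (Fintype.card V)).avail

lemma fingerprint_subset (I : Finset V) : fingerprint w K c I ⊆ I :=
  sdiff_subset

/-- The run with decision set `fingerprint I` makes the same choices as the run with `I`. -/
lemma subset_container_fingerprint (I : Finset V) :
    I ⊆ container w K c (fingerprint w K c I) := by
  intro v hv
  rw [container, fingerprint, run_sdiff_avail I le_rfl, sdiff_union_self_eq_union]
  exact mem_union_left _ hv

lemma card_container_le (T : Finset V) : #(container w K c T) ≤ #T + K :=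
  (card_union_le _ _).trans (Nat.add_le_add_left (card_run_avail_le T) _)

lemma card_fingerprint_le (hw : ∀ u v, 0 ≤ w u v) (hc : 0 ≤ c) (I : Finset V) :
    #(fingerprint w K c I) ≤
      #(run w K c I (Fintype.card V)).picked + #{u ∈ I | c < wdeg w I u} :=
  (card_le_card (sdiff_run_avail_subset hw hc I _)).trans (card_union_le _ _)

end GreedyContainer

open GreedyContainer

namespace SimpleGraph

variable {V : Type*} (F : SimpleGraph V)

noncomputable def codegree (u v : V) : ℝ :=
  Nat.card (F.commonNeighbors u v)

lemma codegree_comm (u v : V) : F.codegree u v = F.codegree v u := by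
  rw [codegree, commonNeighbors_symm, codegree]

variable [Fintype V] [DecidableRel F.Adj]

lemma codegree_eq_sum (u v : V) :
    F.codegree u v = ∑ x, (if F.Adj u x then 1 else 0) * (if F.Adj v x then 1 else 0) := by
  simp_rw [codegree, Nat.card_eq_fintype_card, Fintype.card_subtype, natCast_card_filter,
    mem_commonNeighbors, ite_zero_mul_ite_zero, mul_one]

lemma degree_eq_sum (u : V) : (F.degree u : ℝ) = ∑ x, if F.Adj u x then 1 else 0 := by
  rw [← card_neighborFinset_eq_degree, neighborFinset_eq_filter, natCast_card_filter]

lemma sum_degree_eq_sum_card (A : Finset V) :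
    ∑ u ∈ A, (F.degree u : ℝ) = ∑ x, (#{u ∈ A | F.Adj u x} : ℝ) := by
  simp_rw [degree_eq_sum, natCast_card_filter]
  exact sum_comm

variable [DecidableEq V]

lemma sum_wdeg_codegree (A : Finset V) :
    ∑ u ∈ A, wdeg F.codegree A u =
      ∑ x, ((#{u ∈ A | F.Adj u x} : ℝ) ^ 2 - #{u ∈ A | F.Adj u x}) := by
  set a : V → V → ℝ := fun u x => if F.Adj u x then 1 else 0
  have haa : ∀ u x, a u x * a u x = a u x := fun u x => by by_cases h : F.Adj u x <;> simp [a, h]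
  have hY : ∀ x, (#{u ∈ A | F.Adj u x} : ℝ) = ∑ u ∈ A, a u x := fun x => natCast_card_filter _ _
  calc ∑ u ∈ A, wdeg F.codegree A u
      = ∑ u ∈ A, ∑ x, (a u x * ∑ v ∈ A, a v x - a u x) := by
        refine sum_congr rfl fun u hu => ?_
        simp_rw [wdeg, codegree_eq_sum, ← sum_erase_add _ _ hu, mul_add, haa, add_sub_cancel_right,
          mul_sum]
        exact sum_comm
    _ = ∑ x, ((#{u ∈ A | F.Adj u x} : ℝ) ^ 2 - #{u ∈ A | F.Adj u x}) := by
        rw [sum_comm]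
        simp_rw [sum_sub_distrib, ← sum_mul, hY, sq]

/-- Supersaturation: by Cauchy–Schwarz, a set `A` whose degree sum is at least `2 |V|` spans
many paths of length two. -/
lemma exists_le_wdeg_codegree {D : ℝ} (hdeg : ∀ v, D ≤ F.degree v) {A : Finset V}
    (hA : A.Nonempty) (hAD : 2 * Fintype.card V ≤ #A * D) :
    ∃ v ∈ A, #A * D ^ 2 / (2 * Fintype.card V) ≤ wdeg F.codegree A v := by
  set N : ℝ := (Fintype.card V : ℝ)
  set Y : V → ℝ := fun x => #{u ∈ A | F.Adj u x}
  have hN : 0 < N := by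
    obtain ⟨v, -⟩ := hA
    exact Nat.cast_pos.2 (Fintype.card_pos_iff.2 ⟨v⟩)
  have hS : #A * D ≤ ∑ x, Y x := by
    rw [← sum_degree_eq_sum_card, ← nsmul_eq_mul]
    exact card_nsmul_le_sum _ _ _ fun v _ => hdeg v
  have hCS : (∑ x, Y x) ^ 2 ≤ N * ∑ x, Y x ^ 2 := by
    simpa [N] using sq_sum_le_card_mul_sum_sq (s := univ) (f := Y)
  refine exists_le_of_sum_le hA ?_
  rw [sum_wdeg_codegree, sum_sub_distrib, sum_const, nsmul_eq_mul, mul_div_assoc',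
    div_le_iff₀ (by positivity)]
  nlinarith

lemma exists_le_wdeg_codegree_of_lt {n d : ℕ} (hV : Fintype.card V ≤ n) (hd : 2 ≤ d)
    (hdeg : ∀ v, (d : ℝ) - 1 ≤ F.degree v) {A : Finset V} (hA : 4 * (n : ℝ) < #A * d) :
    ∃ v ∈ A, ((d : ℝ) - 1) ^ 2 / (2 * n) * #A ≤ wdeg F.codegree A v := by
  have hd' : (2 : ℝ) ≤ d := by exact_mod_cast hd
  have hV' : (Fintype.card V : ℝ) ≤ n := by exact_mod_cast hV
  have hAne : A.Nonempty := by
    rw [← card_pos, ← Nat.cast_pos (α := ℝ)]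
    nlinarith [n.cast_nonneg (α := ℝ)]
  have hN : (0 : ℝ) < Fintype.card V := by
    obtain ⟨v, -⟩ := hAne
    exact Nat.cast_pos.2 (Fintype.card_pos_iff.2 ⟨v⟩)
  obtain ⟨v, hv, hle⟩ := F.exists_le_wdeg_codegree hdeg hAne (by nlinarith)
  refine ⟨v, hv, le_trans ?_ hle⟩
  rw [div_mul_eq_mul_div, mul_comm]
  exact div_le_div_of_nonneg_left (by positivity) (by positivity) (by linarith)

end SimpleGraph

lemma SimpleGraph.ndeg_eq_degree {V : Type} [Fintype V] (G : SimpleGraph V) [DecidableRel G.Adj]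
    (v : V) : ndeg G v = G.degree v :=
  Nat.card_eq_fintype_card.trans (G.card_neighborSet_eq_degree v)

lemma two_mul_eSquare {V : Type} [DecidableEq V] (F : SimpleGraph V) (I : Finset V) :
    2 * eSquare F I = ∑ u ∈ I, wdeg F.codegree I u := by
  rw [eSquare, mul_div_cancel₀ _ two_ne_zero]
  exact sum_finset_product' I.offDiag I (I.erase ·) (f := F.codegree) fun p => by
    simp only [mem_offDiag, mem_erase]
    tauto

lemma mul_card_filter_lt_le_sum {ι : Type*} {s : Finset ι} {f : ι → ℝ} (hf : ∀ i ∈ s, 0 ≤ f i)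
    (c : ℝ) : c * #{i ∈ s | c < f i} ≤ ∑ i ∈ s, f i := by
  rw [mul_comm, ← nsmul_eq_mul]
  exact (card_nsmul_le_sum _ _ _ fun i hi => (mem_filter.1 hi).2.le).trans
    (sum_le_sum_of_subset_of_nonneg (filter_subset _ _) fun i hi _ => hf i hi)

lemma card_filter_lt_wdeg_codegree_le {V : Type} [DecidableEq V] (F : SimpleGraph V)
    {I : Finset V} {c x : ℝ} (hc : 0 < c) (hI : 2 * eSquare F I ≤ c * x) :
    (#{u ∈ I | c < wdeg F.codegree I u} : ℝ) ≤ x := by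
  refine le_of_mul_le_mul_left ((mul_card_filter_lt_le_sum (fun u _ => ?_) c).trans ?_) hc
  · exact wdeg_nonneg (fun _ _ => Nat.cast_nonneg _) I u
  · rwa [← two_mul_eSquare]

lemma log_sqrt_le_logb_two (n : ℕ) : log √n ≤ logb 2 n := by
  rw [log_sqrt n.cast_nonneg, logb]
  exact div_le_div_of_nonneg_left (log_natCast_nonneg n) (log_pos one_lt_two)
    (by linarith [log_two_lt_d9])

lemma eventually_four_le_logb_and_four_mul_logb_le_sqrt :
    ∀ᶠ n : ℕ in atTop, 4 ≤ logb 2 n ∧ 4 * logb 2 n ≤ √n := by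
  have hlog := ((isLittleO_log_rpow_atTop (r := 1 / 2) (by norm_num)).def
    (c := log 2 / 4) (by positivity)).natCast_atTop
  filter_upwards [(tendsto_logb_atTop one_lt_two).comp tendsto_natCast_atTop_atTop
    |>.eventually_ge_atTop 4, hlog] with n h₁ h₂
  refine ⟨h₁, ?_⟩
  rw [norm_of_nonneg (log_natCast_nonneg n), norm_of_nonneg (by positivity), ← sqrt_eq_rpow] at h₂
  rw [logb, mul_div_assoc', div_le_iff₀ (log_pos one_lt_two)]
  linarith

lemma le_div_of_mul_exp_le {n d K p : ℕ} {r ℓ : ℝ} (hn : (n : ℝ) = r ^ 2) (hℓ : 4 ≤ ℓ)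
    (hrℓ : 4 * ℓ ≤ r) (hlog : log r ≤ ℓ) (hd₁ : r / ℓ ≤ d) (hd₂ : (d : ℝ) ≤ 2 * r)
    (hK : 4 * n / d < (K + 1 : ℝ))
    (h : ∀ q : ℕ, p = q + 1 →
      (K + 1) * exp ((d - 1) ^ 2 / (2 * n) / (2 * (r / (16 * ℓ ^ 4))) * q) ≤ 2 * n) :
    (p : ℝ) ≤ r / ℓ := by
  set ρ := ((d : ℝ) - 1) ^ 2 / (2 * n) / (2 * (r / (16 * ℓ ^ 4)))
  have hr : 0 < r := by linarith
  have hrℓ' : 4 ≤ r / ℓ := by rw [le_div_iff₀ (by linarith)]; linarith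
  obtain _ | q := p
  · rw [Nat.cast_zero]; positivity
  replace h := h q rfl
  have hd : 4 ≤ (d : ℝ) := hrℓ'.trans hd₁
  have hρ : 9 * ℓ ^ 2 / (4 * r) ≤ ρ := by
    have hd' : 3 * r / (4 * ℓ) ≤ d - 1 := by
      have := hd₁; rw [div_le_iff₀ (by linarith)] at this ⊢; nlinarith
    have hρ' : ρ = 4 * ((d : ℝ) - 1) ^ 2 * ℓ ^ 4 / r ^ 3 := by
      simp only [ρ, hn]; field_simp; ring
    rw [hρ', div_le_div_iff₀ (by positivity) (by positivity)]
    have := pow_le_pow_left₀ (by positivity) hd' 2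
    rw [div_pow, div_le_iff₀ (by positivity)] at this
    nlinarith [mul_le_mul_of_nonneg_left this (by positivity : 0 ≤ ℓ ^ 2 * r)]
  have hexp : exp (ρ * q) ≤ r := by
    rw [div_lt_iff₀ (by linarith)] at hK
    have hn0 : (0 : ℝ) < n := by rw [hn]; positivity
    nlinarith [mul_le_mul_of_nonneg_right h (by linarith : (0 : ℝ) ≤ d),
      mul_lt_mul_of_pos_left hK (exp_pos (ρ * q))]
  have hρq : ρ * q ≤ ℓ := ((le_log_iff_exp_le hr).2 hexp).trans hlog
  have hq : 9 * ℓ * q ≤ 4 * r := by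
    have := (mul_le_mul_of_nonneg_right hρ q.cast_nonneg).trans hρq
    rw [div_mul_eq_mul_div, div_le_iff₀ (by positivity)] at this
    nlinarith
  rw [Nat.cast_succ, le_div_iff₀ (by linarith)]
  linarith

lemma card_run_picked_le {V : Type*} [Fintype V] [DecidableEq V] (F : SimpleGraph V)
    [DecidableRel F.Adj] {n d : ℕ} {ℓ : ℝ} (hℓ : 4 ≤ ℓ) (hℓn : 4 * ℓ ≤ √n) (hlog : log √n ≤ ℓ)
    (hV : Fintype.card V ≤ n) (hd₁ : √n / ℓ ≤ d) (hd₂ : (d : ℝ) ≤ 2 * √n)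
    (hdeg : ∀ v, (d : ℝ) - 1 ≤ F.degree v)
    (hcodeg : ∀ u v, u ≠ v → F.codegree u v ≤ √n / (16 * ℓ ^ 4)) (S : Finset V) :
    (#(run F.codegree ⌊4 * (n : ℝ) / d⌋₊ (√n / (16 * ℓ ^ 4)) S (Fintype.card V)).picked : ℝ) ≤
      √n / ℓ := by
  have hℓ0 : 0 < ℓ := by linarith
  have hr : 0 < √n := by linarith
  have hn : (n : ℝ) = √n ^ 2 := (sq_sqrt n.cast_nonneg).symm
  have hd : (2 : ℝ) ≤ d := le_trans (by rw [le_div_iff₀ hℓ0]; linarith) hd₁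
  have hV' : (Fintype.card V : ℝ) ≤ n := by exact_mod_cast hV
  have hmax : ∀ A : Finset V, ⌊4 * (n : ℝ) / d⌋₊ < #A →
      ∃ v ∈ A, ((d : ℝ) - 1) ^ 2 / (2 * n) * #A ≤ wdeg F.codegree A v := fun A hA =>
    F.exists_le_wdeg_codegree_of_lt hV (by exact_mod_cast hd) hdeg <| by
      rw [← div_lt_iff₀ (by linarith)]
      exact (Nat.floor_lt (by positivity)).1 hA
  exact le_div_of_mul_exp_le hn hℓ hℓn hlog hd₁ hd₂ (Nat.lt_floor_add_one _) fun q hq =>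
    (add_one_mul_exp_le_of_card_picked (div_pos hr (by positivity)) (by positivity) F.codegree_comm
      (fun _ _ => Nat.cast_nonneg _) hcodeg hmax S hq).trans (by linarith)

theorem exists_container {V : Type} [Fintype V] [DecidableEq V] (F : SimpleGraph V)
    [DecidableRel F.Adj] {n d : ℕ} {ℓ : ℝ} (hℓ : 4 ≤ ℓ) (hℓn : 4 * ℓ ≤ √n) (hlog : log √n ≤ ℓ)
    (hV : Fintype.card V ≤ n) (hd₁ : √n / ℓ ≤ d) (hd₂ : (d : ℝ) ≤ 2 * √n)
    (hdeg : ∀ v, (d : ℝ) - 1 ≤ F.degree v)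
    (hcodeg : ∀ u v, u ≠ v → F.codegree u v ≤ √n / (16 * ℓ ^ 4)) :
    ∃ C : Finset V → Finset V, ∀ I : Finset V, eSquare F I ≤ n / (32 * ℓ ^ 5) →
      ∃ T, T ⊆ I ∧ I ⊆ C T ∧ (#T : ℝ) ≤ 2 * √n / ℓ ∧ (#(C T) : ℝ) ≤ 5 * n / d := by
  set r := √n
  set c := r / (16 * ℓ ^ 4)
  set K := ⌊4 * (n : ℝ) / d⌋₊
  have hℓ0 : 0 < ℓ := by linarith
  have hr : 0 < r := by linarith
  have hn : (n : ℝ) = r ^ 2 := (sq_sqrt n.cast_nonneg).symm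
  have hd : 0 < (d : ℝ) := (div_pos hr hℓ0).trans_le hd₁
  have hc : 0 < c := div_pos hr (by positivity)
  refine ⟨container F.codegree K c, fun I hI => ⟨fingerprint F.codegree K c I,
    fingerprint_subset I, subset_container_fingerprint I, ?_⟩⟩
  have hB : (#{u ∈ I | c < wdeg F.codegree I u} : ℝ) ≤ r / ℓ := by
    refine card_filter_lt_wdeg_codegree_le F hc ?_
    calc 2 * eSquare F I ≤ 2 * (n / (32 * ℓ ^ 5)) := by linarith
      _ = c * (r / ℓ) := by simp only [c, hn]; field_simp; ring
  have hP : (#(run F.codegree K c I (Fintype.card V)).picked : ℝ) ≤ r / ℓ :=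
    card_run_picked_le F hℓ hℓn hlog hV hd₁ hd₂ hdeg hcodeg I
  have hT : (#(fingerprint F.codegree K c I) : ℝ) ≤ 2 * r / ℓ := by
    have := (Nat.cast_le (α := ℝ)).2
      (card_fingerprint_le (w := F.codegree) (K := K) (fun _ _ => Nat.cast_nonneg _) hc.le I)
    push_cast at this
    rw [mul_div_assoc]
    linarith
  have hK : (K : ℝ) ≤ 4 * n / d := Nat.floor_le (by positivity)
  have hnd : 2 * r / ℓ ≤ n / d := by
    rw [div_le_div_iff₀ hℓ0 hd, hn]
    nlinarith
  refine ⟨hT, ?_⟩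
  have := (Nat.cast_le (α := ℝ)).2 (card_container_le (w := F.codegree) (K := K) (c := c)
    (fingerprint F.codegree K c I))
  push_cast at this
  linarith [show 5 * (n : ℝ) / d = 4 * n / d + n / d by ring]

/-- Certificate lemma for graphs with few 4-cycles.  With `b = 16 log⁴ n` and
`g = 32 log⁵ n`: for all sufficiently large `n`, all `m ≤ n - 1` and `√n/log n ≤ d ≤ 2√n`,
and every `m`-vertex graph `F` with minimum degree at least `d - 1` in which every two
distinct vertices have at most `√n/b` common neighbors, there is a container function `C`
such that every `I ⊆ V(F)` with `|I| = d` and `e(F²[I]) ≤ n/g` has a fingerprint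
`T ⊆ I ⊆ C T` with `|T| ≤ 2√n/log n` and `|C T| ≤ 5n/d`. -/
theorem statement_7 :
    ∃ n₀ : ℕ, ∀ n : ℕ, n₀ ≤ n →
      ∀ m d : ℕ, m ≤ n - 1 →
        Real.sqrt n / Real.logb 2 n ≤ (d : ℝ) → (d : ℝ) ≤ 2 * Real.sqrt n →
        ∀ F : SimpleGraph (Fin m),
          (∀ w, (d : ℝ) - 1 ≤ (ndeg F w : ℝ)) →
          (∀ u v : Fin m, u ≠ v →
            (Nat.card ↥(F.neighborSet u ∩ F.neighborSet v) : ℝ) ≤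
              Real.sqrt n / (16 * Real.logb 2 n ^ 4)) →
          ∃ C : Finset (Fin m) → Finset (Fin m),
            ∀ I : Finset (Fin m), I.card = d →
              eSquare F I ≤ (n : ℝ) / (32 * Real.logb 2 n ^ 5) →
              ∃ T : Finset (Fin m), T ⊆ I ∧ I ⊆ C T ∧
                (T.card : ℝ) ≤ 2 * Real.sqrt n / Real.logb 2 n ∧
                ((C T).card : ℝ) ≤ 5 * n / d := by
  classical
  obtain ⟨n₀, hn₀⟩ := eventually_atTop.1 eventually_four_le_logb_and_four_mul_logb_le_sqrt
  refine ⟨n₀, fun n hn m d hm hd₁ hd₂ F hdeg hcodeg => ?_⟩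
  obtain ⟨hℓ, hℓn⟩ := hn₀ n hn
  obtain ⟨C, hC⟩ := exists_container F hℓ hℓn (log_sqrt_le_logb_two n)
    (by rw [Fintype.card_fin]; omega) hd₁ hd₂ (fun v => F.ndeg_eq_degree v ▸ hdeg v) hcodeg
  exact ⟨C, fun I _ hI => hC I hI⟩
end

section
/- There exists n₀ such that for every integer n ≥ n₀ and every graph G ∈ 𝒢_n, the number of edges of G not in Ĝ satisfies |E(G) \ E(Ĝ)| ≤ 4 n^{3/2}/log² n. -/
/-- The graph `Ĝ` obtained from `G` by deleting, for every pair `i < j` whose number of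
common neighbors exceeds the threshold `t`, all edges from `i` to the common neighborhood
`N_G(i,j)`. -/
def hatG {n : ℕ} (G : SimpleGraph (Fin n)) (t : ℝ) : SimpleGraph (Fin n) where
  Adj x y := G.Adj x y ∧
    (¬ ∃ j, x < j ∧ t < (Nat.card ↥(G.neighborSet x ∩ G.neighborSet j) : ℝ) ∧
      y ∈ G.neighborSet x ∩ G.neighborSet j) ∧
    (¬ ∃ j, y < j ∧ t < (Nat.card ↥(G.neighborSet y ∩ G.neighborSet j) : ℝ) ∧
      x ∈ G.neighborSet y ∩ G.neighborSet j)
  symm := ⟨fun x y h => ⟨h.1.symm, h.2.2, h.2.1⟩⟩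
  loopless := ⟨fun x h => G.loopless.irrefl x h.1⟩

open Finset

lemma eq_and_eq_of_lt_of_lt_of_forall_or_iff {α : Type*} [LinearOrder α] {a b c d : α}
    (hab : a < b) (hcd : c < d) (h : ∀ x, x = a ∨ x = b ↔ x = c ∨ x = d) : a = c ∧ b = d := by
  have ha := (h a).1 (.inl rfl); have hb := (h b).1 (.inr rfl)
  have hc := (h c).2 (.inl rfl); have hd := (h d).2 (.inr rfl)
  rcases ha with ha | ha <;> rcases hb with hb | hb <;> rcases hc with hc | hc <;>
    rcases hd with hd | hd <;> constructor <;> order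

lemma Finset.card_le_two_mul_card_offDiag_div {α : Type*} [DecidableEq α] {s : Finset α}
    {t : ℝ} (ht : 2 ≤ t) (hs : t < #s) : (#s : ℝ) ≤ 2 * #s.offDiag / t := by
  rw [Finset.offDiag_card, Nat.cast_sub (Nat.le_mul_self _), le_div_iff₀ (by linarith)]
  push_cast
  nlinarith

lemma Real.rpow_three_halves_eq_mul_sqrt {x : ℝ} (hx : 0 ≤ x) : x ^ ((3 : ℝ) / 2) = x * √x := by
  rw [Real.sqrt_eq_rpow, ← Real.rpow_one_add' hx (by norm_num)]
  norm_num

lemma eventually_mul_logb_pow_le_sqrt :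
    ∀ᶠ x : ℝ in Filter.atTop, 32 * Real.logb 2 x ^ 4 ≤ √x := by
  filter_upwards [(Real.isLittleO_pow_logb_id_atTop (b := 2) (n := 8)).bound
    (by norm_num : (0 : ℝ) < 1 / 1024), Filter.eventually_ge_atTop 0] with x hx hx0
  rw [Real.norm_eq_abs, Real.norm_eq_abs, id, abs_of_nonneg (by positivity),
    abs_of_nonneg hx0] at hx
  exact Real.le_sqrt_of_sq_le (by nlinarith)

namespace SimpleGraph

variable {V : Type} {G : SimpleGraph V}

variable (G) in
def cycle4Copy {i j u v : V} (hij : i ≠ j) (huv : u ≠ v) (hu : u ∈ G.commonNeighbors i j)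
    (hv : v ∈ G.commonNeighbors i j) : Copy (cycleGraph 4) G where
  toHom := ⟨![i, u, j, v], fun {a b} hab => by
    rw [mem_commonNeighbors] at hu hv
    fin_cases a <;> fin_cases b <;> first
      | exact absurd hab (by decide)
      | simp_all [adj_comm]⟩
  injective' a b hab := by
    rw [mem_commonNeighbors] at hu hv
    have := hu.1.ne; have := hu.2.ne; have := hv.1.ne; have := hv.2.ne
    fin_cases a <;> fin_cases b <;> simp_all [eq_comm]

section cycle4Copy

variable {i j u v : V} {hij : i ≠ j} {huv : u ≠ v} {hu : u ∈ G.commonNeighbors i j}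
  {hv : v ∈ G.commonNeighbors i j}

lemma verts_cycle4Copy : (G.cycle4Copy hij huv hu hv).toSubgraph.verts = {i, u, j, v} := by
  ext x
  simp [cycle4Copy, Matrix.range_cons, or_comm, or_left_comm]

lemma adj_cycle4Copy_iff {x : V} :
    (G.cycle4Copy hij huv hu hv).toSubgraph.Adj u x ↔ x = i ∨ x = j := by
  simp only [Subgraph.map_adj, Subgraph.top_adj, Relation.map_apply]
  constructor
  · rintro ⟨a, b, hab, ha, rfl⟩
    obtain rfl : a = 1 := (G.cycle4Copy hij huv hu hv).injective ha
    fin_cases b <;> first | exact absurd hab (by decide) | simp [cycle4Copy]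
  · rintro (rfl | rfl)
    exacts [⟨1, 0, by decide, rfl, rfl⟩, ⟨1, 2, by decide, rfl, rfl⟩]

end cycle4Copy

lemma eq_of_toSubgraph_cycle4Copy_eq [LinearOrder V] {i j u v i' j' v' : V} (hij : i < j)
    (hij' : i' < j') {huv : u ≠ v} {huv' : u ≠ v'} {hu : u ∈ G.commonNeighbors i j}
    {hv : v ∈ G.commonNeighbors i j} {hu' : u ∈ G.commonNeighbors i' j'}
    {hv' : v' ∈ G.commonNeighbors i' j'}
    (h : (G.cycle4Copy hij.ne huv hu hv).toSubgraph =
      (G.cycle4Copy hij'.ne huv' hu' hv').toSubgraph) :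
    i = i' ∧ j = j' ∧ v = v' := by
  obtain ⟨rfl, rfl⟩ : i = i' ∧ j = j' :=
    eq_and_eq_of_lt_of_lt_of_forall_or_iff hij hij' fun x => by
      simpa only [adj_cycle4Copy_iff, eq_iff_iff] using
        congrArg (fun S : G.Subgraph => S.Adj u x) h
  refine ⟨rfl, rfl, ?_⟩
  have hmem : v ∈ (G.cycle4Copy hij.ne huv' hu' hv').toSubgraph.verts := by
    rw [← h, verts_cycle4Copy]; simp
  rw [verts_cycle4Copy] at hmem
  rw [mem_commonNeighbors] at hv
  simp only [Set.mem_insert_iff, Set.mem_singleton_iff] at hmem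
  rcases hmem with rfl | rfl | rfl | rfl
  exacts [absurd hv.1 G.irrefl, absurd rfl huv, absurd hv.2 G.irrefl, rfl]

section Counting

variable [Fintype V] [LinearOrder V] [DecidableRel G.Adj]

lemma sum_card_offDiag_commonNeighbors_le_s8 (P : Finset (V × V)) (hP : ∀ p ∈ P, p.1 < p.2) :
    ∑ p ∈ P, #(G.commonNeighbors p.1 p.2).toFinset.offDiag ≤ 4 * numC4 G := by
  classical
  let C4 := {S : G.Subgraph // Nonempty (S.coe ≃g cycleGraph 4)}
  have hcard : Nat.card {x : C4 × V // x.2 ∈ x.1.1.verts} = 4 * numC4 G := by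
    have hS (S : C4) : Nat.card S.1.verts = 4 := by
      simpa using Nat.card_congr S.2.some.toEquiv
    rw [Nat.card_congr (Equiv.subtypeProdEquivSigmaSubtype fun (S : C4) v => v ∈ S.1.verts),
      Nat.card_sigma, Finset.sum_const_nat fun S _ => hS S, Finset.card_univ, numC4,
      Nat.card_eq_fintype_card, mul_comm]
  have hmem : ∀ q ∈ P.sigma fun p => (G.commonNeighbors p.1 p.2).toFinset.offDiag,
      q.1.1 < q.1.2 ∧ q.2.1 ≠ q.2.2 ∧ q.2.1 ∈ G.commonNeighbors q.1.1 q.1.2 ∧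
        q.2.2 ∈ G.commonNeighbors q.1.1 q.1.2 := by
    intro q hq
    simp only [Finset.mem_sigma, Finset.mem_offDiag, Set.mem_toFinset] at hq
    exact ⟨hP _ hq.1, hq.2.2.2, hq.2.1, hq.2.2.1⟩
  rw [← Finset.card_sigma, ← Nat.card_eq_finsetCard, ← hcard]
  refine Nat.card_le_card_of_injective (fun q =>
    let h := hmem q.1 q.2
    ⟨(⟨(G.cycle4Copy h.1.ne h.2.1 h.2.2.1 h.2.2.2).toSubgraph,
      ⟨(Copy.isoToSubgraph _).symm⟩⟩, q.1.2.1), ⟨1, trivial, rfl⟩⟩) ?_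
  rintro ⟨⟨⟨i, j⟩, u, v⟩, hq⟩ ⟨⟨⟨i', j'⟩, u', v'⟩, hq'⟩ h
  obtain rfl : u = u' := congrArg (·.1.2) h
  obtain ⟨rfl, rfl, rfl⟩ :=
    eq_of_toSubgraph_cycle4Copy_eq (hmem _ hq).1 (hmem _ hq').1 (congrArg (·.1.1.1) h)
  rfl

variable (G) in
noncomputable def heavyPairs (t : ℝ) : Finset (V × V) :=
  {p | p.1 < p.2 ∧ t < #(G.commonNeighbors p.1 p.2).toFinset}

end Counting

lemma card_edgeSet_diff_hatG_le {n : ℕ} (G : SimpleGraph (Fin n)) [DecidableRel G.Adj]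
    (t : ℝ) :
    Nat.card ↥(G.edgeSet \ (hatG G t).edgeSet) ≤
      ∑ p ∈ G.heavyPairs t, #(G.commonNeighbors p.1 p.2).toFinset := by
  have hsub : G.edgeSet \ (hatG G t).edgeSet ⊆
      ↑(((G.heavyPairs t).sigma fun p => (G.commonNeighbors p.1 p.2).toFinset).image
        fun q => s(q.1.1, q.2)) := by
    rintro ⟨x, y⟩ ⟨hxy, hhat⟩
    have : (∃ j, x < j ∧ t < (Nat.card (G.commonNeighbors x j) : ℝ) ∧
          y ∈ G.commonNeighbors x j) ∨
        (∃ j, y < j ∧ t < (Nat.card (G.commonNeighbors y j) : ℝ) ∧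
          x ∈ G.commonNeighbors y j) := by
      by_contra! h
      exact hhat ⟨hxy, fun ⟨j, hj⟩ => h.1 j hj.1 hj.2.1 hj.2.2,
        fun ⟨j, hj⟩ => h.2 j hj.1 hj.2.1 hj.2.2⟩
    simp only [Finset.coe_image, Set.mem_image, Finset.mem_coe, Finset.mem_sigma, heavyPairs,
      Finset.mem_filter, Finset.mem_univ, true_and, Set.mem_toFinset, Set.toFinset_card,
      ← Nat.card_eq_fintype_card, Sigma.exists]
    rcases this with ⟨j, hxj, hcard, hy⟩ | ⟨j, hyj, hcard, hx⟩
    · exact ⟨(x, j), y, ⟨⟨hxj, hcard⟩, hy⟩, rfl⟩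
    · exact ⟨(y, j), x, ⟨⟨hyj, hcard⟩, hx⟩, Sym2.eq_swap⟩
  calc Nat.card ↥(G.edgeSet \ (hatG G t).edgeSet)
      ≤ #(((G.heavyPairs t).sigma fun p => (G.commonNeighbors p.1 p.2).toFinset).image
          fun q => s(q.1.1, q.2)) := by
        rw [Nat.card_coe_set_eq, ← Set.ncard_coe_finset]
        exact Set.ncard_le_ncard hsub
    _ ≤ _ := Finset.card_image_le.trans (Finset.card_sigma _ _).le

lemma card_edgeSet_diff_hatG_le_of_two_le {n : ℕ} (G : SimpleGraph (Fin n)) {t : ℝ}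
    (ht : 2 ≤ t) : (Nat.card ↥(G.edgeSet \ (hatG G t).edgeSet) : ℝ) ≤ 8 * numC4 G / t := by
  classical
  have mem_heavyPairs {p} (hp : p ∈ G.heavyPairs t) :
      p.1 < p.2 ∧ t < #(G.commonNeighbors p.1 p.2).toFinset := by
    simpa [heavyPairs] using hp
  calc (Nat.card ↥(G.edgeSet \ (hatG G t).edgeSet) : ℝ)
      ≤ ∑ p ∈ G.heavyPairs t, (#(G.commonNeighbors p.1 p.2).toFinset : ℝ) := by
        exact_mod_cast card_edgeSet_diff_hatG_le G t
    _ ≤ ∑ p ∈ G.heavyPairs t, 2 * (#(G.commonNeighbors p.1 p.2).toFinset.offDiag : ℝ) / t :=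
        Finset.sum_le_sum fun p hp =>
          Finset.card_le_two_mul_card_offDiag_div ht (mem_heavyPairs hp).2
    _ = 2 * (∑ p ∈ G.heavyPairs t, #(G.commonNeighbors p.1 p.2).toFinset.offDiag : ℕ) / t := by
        rw [← Finset.sum_div, ← Finset.mul_sum, Nat.cast_sum]
    _ ≤ 2 * (4 * numC4 G : ℕ) / t := by
        gcongr
        exact G.sum_card_offDiag_commonNeighbors_le_s8 _ fun p hp => (mem_heavyPairs hp).1
    _ = 8 * numC4 G / t := by push_cast; ring

end SimpleGraph

/-- With `a = 32 log⁶ n` and `b = 16 log⁴ n` (base-2 logs): for all sufficiently large `n`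
and every graph `G` on `[n]` with at most `n²/a` copies of `C₄`, the number of edges of `G`
not in `Ĝ` (built with threshold `√n/b`) is at most `4 n^{3/2} / log² n`. -/
theorem statement_8 :
    ∃ n₀ : ℕ, ∀ n : ℕ, n₀ ≤ n → ∀ G : SimpleGraph (Fin n),
      (numC4 G : ℝ) ≤ (n : ℝ) ^ 2 / (32 * Real.logb 2 n ^ 6) →
      (Nat.card
          ↥(G.edgeSet \ (hatG G (Real.sqrt n / (16 * Real.logb 2 n ^ 4))).edgeSet) : ℝ) ≤
        4 * (n : ℝ) ^ ((3 : ℝ) / 2) / Real.logb 2 n ^ 2 := by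
  have hlarge : ∀ᶠ n : ℕ in Filter.atTop, 1 ≤ Real.logb 2 n ∧ 32 * Real.logb 2 n ^ 4 ≤ √n :=
    tendsto_natCast_atTop_atTop.eventually
      (((Real.tendsto_logb_atTop one_lt_two).eventually_ge_atTop 1).and
        eventually_mul_logb_pow_le_sqrt)
  obtain ⟨n₀, hn₀⟩ := Filter.eventually_atTop.mp hlarge
  refine ⟨n₀, fun n hn G hC4 => ?_⟩
  obtain ⟨hL, hsqrt⟩ := hn₀ n hn
  set L := Real.logb 2 n
  have hn : (0 : ℝ) < n := Real.sqrt_pos.mp (by nlinarith [one_le_pow₀ (n := 4) hL])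
  have ht : 2 ≤ √n / (16 * L ^ 4) := by
    rw [le_div_iff₀ (by positivity)]
    linarith
  calc _ ≤ 8 * numC4 G / (√n / (16 * L ^ 4)) :=
        SimpleGraph.card_edgeSet_diff_hatG_le_of_two_le G ht
    _ ≤ 8 * ((n : ℝ) ^ 2 / (32 * L ^ 6)) / (√n / (16 * L ^ 4)) := by gcongr
    _ = 4 * (n : ℝ) ^ ((3 : ℝ) / 2) / L ^ 2 := by
        rw [Real.rpow_three_halves_eq_mul_sqrt hn.le]
        field_simp
        rw [Real.sq_sqrt hn.le]
        ring
end

section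
/- Let ℓ ≤ m be positive integers and L > 0 a constant, and let F be an m-vertex graph such that c_i(u,v;F) ≤ L for every edge uv of F and every 3 ≤ i ≤ 2ℓ. Then for every 1 ≤ k ≤ ℓ-1, every vertex v of F, and every u ∈ Γ_k(v), we have |N_F(u) ∩ Γ_k(v)| ≤ Lk. -/
/-- `c_k(u,v;G)`: the number of cycles of length `k` in `G` containing the edge `uv`.
Each such cycle corresponds to a unique path from `u` to `v` of length `k-1`
avoiding the edge `uv`. -/
noncomputable def cyclesThroughEdge {V : Type} (G : SimpleGraph V) (k : ℕ) (u v : V) : ℕ :=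
  Nat.card {p : G.Walk u v // p.IsPath ∧ p.length = k - 1 ∧ s(u, v) ∉ p.edges}

/-- `Γ_k(v)`: the set of vertices at distance exactly `k` from `v`. -/
def distSphere {V : Type} (G : SimpleGraph V) (k : ℕ) (v : V) : Set V :=
  {u | G.dist v u = k}

/-! Let `x` be the neighbour of `u` on a geodesic from `v`. For every neighbour `w` of `u` with
`d(v, w) = k`, follow a geodesic from `x` towards `v` until it first meets a geodesic from `v`
to `w`, at a vertex `z`, then follow the latter to `w` and step to `u`. Both legs have length
`d(v, u) - d(v, z) - 1` and `d(v, u) - d(v, z)`, so this is a path from `x` to `u` of length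
`2j + 2` with `j < k`, avoiding the edge `xu`. Together with `xu` it is a cycle of length
`2j + 3 ≤ 2ℓ` through `xu` in which `w` precedes `u`, so distinct `w` give distinct cycles, and
there are at most `L` cycles of each of the `k` lengths. -/

namespace SimpleGraph

section

variable {V : Type*} {G : SimpleGraph V}

lemma exists_adj_dist_add_one_eq {v u : V} (h : G.dist v u ≠ 0) :
    ∃ x, G.Adj x u ∧ G.dist v x + 1 = G.dist v u := by
  obtain ⟨P, hP⟩ := (Reachable.of_dist_ne_zero h).exists_walk_length_eq_dist
  have hPnil : ¬P.Nil := fun hnil => h (by rw [← hP, hnil.length_eq_zero])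
  refine ⟨P.penultimate, P.adj_penultimate hPnil, le_antisymm ?_ ?_⟩
  · have := dist_le P.dropLast
    rw [Walk.length_dropLast] at this
    omega
  · obtain ⟨W, hW⟩ := P.dropLast.reachable.exists_walk_length_eq_dist
    simpa [hW] using dist_le (W.concat (P.adj_penultimate hPnil))

namespace Walk

variable [DecidableEq V]

lemma dist_lt_length_of_mem_support {v w y : V} (p : G.Walk v w) (hy : y ∈ p.support)
    (hyw : y ≠ w) : G.dist v y < p.length :=
  (dist_le _).trans_lt (p.length_takeUntil_lt_length hy hyw)

lemma dist_add_length_dropUntil_of_length_eq_dist {v w z : V} {p : G.Walk v w}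
    (hp : p.length = G.dist v w) (hz : z ∈ p.support) :
    G.dist v z + (p.dropUntil z hz).length = p.length := by
  rw [← length_eq_dist_of_subwalk hp (p.isSubwalk_takeUntil hz), ← length_append, take_spec]

/-- `S` is `R` up to its first vertex on `Q`. -/
lemma exists_append_eq_isPath_append_dropUntil {w : V} :
    ∀ {x y : V} (R : G.Walk x y), R.IsPath → ∀ (Q : G.Walk y w), Q.IsPath →
    ∃ (z : V) (hz : z ∈ Q.support) (S : G.Walk x z) (E : G.Walk z y),
      S.append E = R ∧ (S.append (Q.dropUntil z hz)).IsPath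
  | _, _, .nil, _, Q, hQ => ⟨_, Q.start_mem_support, nil, nil, rfl, by simpa using hQ⟩
  | a, _, .cons h p, hR, Q, hQ => by
    rw [cons_isPath_iff] at hR
    by_cases ha : a ∈ Q.support
    · exact ⟨a, ha, nil, cons h p, rfl, by simpa using hQ.dropUntil _⟩
    obtain ⟨z, hz, S, E, rfl, hpath⟩ := exists_append_eq_isPath_append_dropUntil p hR.1 Q hQ
    refine ⟨z, hz, cons h S, E, rfl, ?_⟩
    rw [cons_append, cons_isPath_iff, mem_support_append_iff]
    refine ⟨hpath, ?_⟩
    rintro (haS | haQ)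
    · exact hR.2 ((mem_support_append_iff _ _).2 (Or.inl haS))
    · exact ha (Q.support_dropUntil_subset_support hz haQ)

end Walk

open Walk

variable [DecidableEq V]

lemma exists_isPath_penultimate_eq_of_dist_eq {v u x w : V} (hx : G.Adj x u)
    (hxd : G.dist v x + 1 = G.dist v u) (hw : G.Adj w u) (hwd : G.dist v w = G.dist v u) :
    ∃ T : G.Walk x u, T.IsPath ∧ s(x, u) ∉ T.edges ∧ T.penultimate = w ∧
      ∃ j < G.dist v u, T.length = 2 * j + 2 := by
  have hvu : G.Reachable v u := Reachable.of_dist_ne_zero (by omega)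
  obtain ⟨R, hRp, hRlen⟩ := (hvu.trans hx.symm.reachable).symm.exists_path_of_dist
  obtain ⟨Q, hQp, hQlen⟩ :=
    (Reachable.of_dist_ne_zero (by omega : G.dist v w ≠ 0)).exists_path_of_dist
  rw [dist_comm] at hRlen
  have huR : u ∉ R.support := fun hu => by
    have := R.reverse.dist_lt_length_of_mem_support (by simpa using hu) hx.ne.symm
    rw [length_reverse] at this
    omega
  have huQ : u ∉ Q.support := fun hu => by
    have := Q.dist_lt_length_of_mem_support hu hw.ne.symm
    omega
  obtain ⟨z, hz, S, E, rfl, hA⟩ := exists_append_eq_isPath_append_dropUntil R hRp Q hQp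
  set D := Q.dropUntil z hz
  have hD : G.dist v z + D.length = G.dist v w := by
    rw [dist_add_length_dropUntil_of_length_eq_dist hQlen hz, hQlen]
  have hzE : G.dist v z ≤ E.length := dist_comm (G := G) ▸ dist_le E
  have hzS : G.dist v u ≤ G.dist v z + S.length + 1 := by
    obtain ⟨P, hP⟩ := E.reverse.reachable.exists_walk_length_eq_dist
    simpa [hP] using dist_le ((P.append S.reverse).concat hx)
  rw [length_append] at hRlen
  have huA : u ∉ (S.append D).support := by
    rw [mem_support_append_iff]
    rintro (hu | hu)
    · exact huR ((mem_support_append_iff _ _).2 (Or.inl hu))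
    · exact huQ (Q.support_dropUntil_subset_support hz hu)
  refine ⟨(S.append D).concat hw, hA.concat huA hw, ?_, penultimate_concat _ _, S.length, ?_, ?_⟩
  · rw [edges_concat, List.concat_eq_append, List.mem_append, List.mem_singleton]
    rintro (he | he)
    · exact huA ((S.append D).snd_mem_support_of_mem_edges he)
    · obtain rfl : x = w := by simpa [hx.ne] using he
      omega
  · omega
  · rw [length_concat, length_append]
    omega

lemma finite_isPath_length_eq_not_mem_edges [G.LocallyFinite] (n : ℕ) (x u : V) :
    Finite {p : G.Walk x u // p.IsPath ∧ p.length = n ∧ s(x, u) ∉ p.edges} :=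
  Finite.of_injective (fun p => (⟨p.1, p.2.2.1⟩ : {q : G.Walk x u // q.length = n}))
    fun _ _ h => Subtype.ext (congrArg Subtype.val h :)

end

variable {V : Type} [DecidableEq V] {G : SimpleGraph V}

lemma card_neighborSet_inter_distSphere_le [G.LocallyFinite] {v u x : V} (hx : G.Adj x u)
    (hxd : G.dist v x + 1 = G.dist v u) :
    Nat.card ↥(G.neighborSet u ∩ distSphere G (G.dist v u) v) ≤
      ∑ j ∈ Finset.range (G.dist v u), cyclesThroughEdge G (2 * j + 3) x u := by
  set k := G.dist v u
  let C : Fin k → Type := fun j =>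
    {p : G.Walk x u // p.IsPath ∧ p.length = (2 * j + 3) - 1 ∧ s(x, u) ∉ p.edges}
  have := fun j : Fin k => finite_isPath_length_eq_not_mem_edges (G := G) ((2 * j + 3) - 1) x u
  have hsub : G.neighborSet u ∩ distSphere G k v ⊆
      Set.range fun c : Σ j, C j => c.2.1.penultimate := by
    rintro w ⟨hw, hwd⟩
    obtain ⟨T, hTp, hTe, rfl, j, hj, hT⟩ :=
      exists_isPath_penultimate_eq_of_dist_eq hx hxd hw.symm hwd
    exact ⟨⟨⟨j, hj⟩, T, hTp, hT, hTe⟩, rfl⟩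
  calc Nat.card ↥(G.neighborSet u ∩ distSphere G k v)
      ≤ Nat.card (Set.range fun c : Σ j, C j => c.2.1.penultimate) :=
        Nat.card_mono (Set.finite_range _) hsub
    _ ≤ Nat.card (Σ j, C j) := Finite.card_range_le _
    _ = ∑ j ∈ Finset.range k, cyclesThroughEdge G (2 * j + 3) x u := by
        rw [Nat.card_sigma, ← Fin.sum_univ_eq_sum_range]
        rfl

end SimpleGraph

theorem statement_10_general (ℓ m : ℕ) (L : ℝ)
    (F : SimpleGraph (Fin m))
    (hc : ∀ u v, F.Adj u v → ∀ i, 3 ≤ i → i ≤ 2 * ℓ → (cyclesThroughEdge F i u v : ℝ) ≤ L) :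
    ∀ k, 1 ≤ k → k ≤ ℓ - 1 → ∀ v u : Fin m, u ∈ distSphere F k v →
      (Nat.card ↥(F.neighborSet u ∩ distSphere F k v) : ℝ) ≤ L * k := by
  classical
  intro k hk hkℓ v u hu
  subst hu
  obtain ⟨x, hx, hxd⟩ := SimpleGraph.exists_adj_dist_add_one_eq (by omega : F.dist v u ≠ 0)
  calc (Nat.card ↥(F.neighborSet u ∩ distSphere F (F.dist v u) v) : ℝ)
      ≤ ∑ j ∈ Finset.range (F.dist v u), (cyclesThroughEdge F (2 * j + 3) x u : ℝ) := by
        exact_mod_cast SimpleGraph.card_neighborSet_inter_distSphere_le hx hxd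
    _ ≤ ∑ _j ∈ Finset.range (F.dist v u), L :=
        Finset.sum_le_sum fun j hj => hc x u hx _ (by omega) (by simp at hj; omega)
    _ = L * F.dist v u := by simp [mul_comm]

/-- Let `1 ≤ ℓ ≤ m` and `L > 0`, and let `F` be an `m`-vertex graph with `c_i(u,v;F) ≤ L`
for every edge `uv` and every `3 ≤ i ≤ 2ℓ`.  Then for every `1 ≤ k ≤ ℓ - 1`, every vertex
`v` and every `u ∈ Γ_k(v)`, we have `|N_F(u) ∩ Γ_k(v)| ≤ L k`. -/
theorem statement_10 (ℓ m : ℕ) (hℓ : 1 ≤ ℓ) (hm : ℓ ≤ m) (L : ℝ) (hL : 0 < L)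
    (F : SimpleGraph (Fin m))
    (hc : ∀ u v, F.Adj u v → ∀ i, 3 ≤ i → i ≤ 2 * ℓ → (cyclesThroughEdge F i u v : ℝ) ≤ L) :
    ∀ k, 1 ≤ k → k ≤ ℓ - 1 → ∀ v u : Fin m, u ∈ distSphere F k v →
      (Nat.card ↥(F.neighborSet u ∩ distSphere F k v) : ℝ) ≤ L * k :=
  statement_10_general ℓ m L F hc
end

section
/- Let ℓ ≤ m be positive integers and L > 0 a constant, and let F be an m-vertex graph such that c_i(u,v;F) ≤ L for every edge uv of F and every 3 ≤ i ≤ 2ℓ. Then for every 2 ≤ k ≤ ℓ, every vertex v of F, and every u ∈ Γ_k(v), we have |N_F(u) ∩ Γ_{k-1}(v)| ≤ L(k-1) + 1. -/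
open SimpleGraph Walk

variable {V : Type} {G : SimpleGraph V}

/-- Split a walk at the first vertex lying in a set `S` containing the endpoint. -/
lemma walk_split {w v : V} (Q : G.Walk w v) (S : Set V) (hv : v ∈ S) :
    ∃ (x : V) (Q₁ : G.Walk w x) (Q₂ : G.Walk x v),
      x ∈ S ∧ Q = Q₁.append Q₂ ∧ ∀ y ∈ Q₁.support, y ∈ S → y = x := by
  classical
  revert hv
  induction Q with
  | nil =>
    intro hv
    exact ⟨_, .nil, .nil, hv, rfl, by simp⟩
  | @cons a b c h p ih =>
    by_cases ha : a ∈ S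
    · intro _
      refine ⟨a, .nil, .cons h p, ha, rfl, ?_⟩
      intro y hy _
      simpa using hy
    · intro hv
      obtain ⟨x, Q₁, Q₂, hx, hQ, hmeet⟩ := ih hv
      refine ⟨x, .cons h Q₁, Q₂, hx, by rw [Walk.cons_append, hQ], ?_⟩
      intro y hy hyS
      rcases List.mem_cons.mp (by simpa using hy) with rfl | hy'
      · exact absurd hyS ha
      · exact hmeet y hy' hyS

lemma isPath_append' {u v w : V} {p : G.Walk u v} {q : G.Walk v w} (hp : p.IsPath)
    (hq : q.IsPath) (hmeet : ∀ y ∈ p.support, y ∈ q.support → y = v) :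
    (p.append q).IsPath := by
  rw [Walk.isPath_def, Walk.support_append]
  have hvt : v ∉ q.support.tail := by
    have := hq.support_nodup
    rw [q.support_eq_cons] at this
    exact (List.nodup_cons.mp this).1
  refine List.Nodup.append hp.support_nodup (hq.support_nodup.tail) ?_
  intro y hyp hyt
  have : y = v := hmeet y hyp (List.mem_of_mem_tail hyt)
  subst this
  exact hvt hyt

lemma split_lengths {a b x : V} (P₁ : G.Walk a x) (P₂ : G.Walk x b)
    (h : (P₁.append P₂).length = G.dist a b) :
    P₁.length = G.dist a x ∧ P₂.length = G.dist x b := by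
  rw [Walk.length_append] at h
  have h1 := SimpleGraph.dist_le P₁
  have h2 := SimpleGraph.dist_le P₂
  obtain ⟨W1, hW1⟩ := P₁.reachable.exists_walk_length_eq_dist
  obtain ⟨W2, hW2⟩ := P₂.reachable.exists_walk_length_eq_dist
  have t1 := SimpleGraph.dist_le (W1.append P₂)
  have t2 := SimpleGraph.dist_le (P₁.append W2)
  rw [Walk.length_append, hW1] at t1
  rw [Walk.length_append, hW2] at t2
  omega

lemma dist_le_of_mem_support [DecidableEq V] {w v y : V} (Q : G.Walk w v)
    (hy : y ∈ Q.support) : G.dist y v ≤ Q.length :=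
  (SimpleGraph.dist_le (Q.dropUntil y hy)).trans (Q.length_dropUntil_le hy)

/-- Let `1 ≤ ℓ ≤ m` and `L > 0`, and let `F` be an `m`-vertex graph with `c_i(u,v;F) ≤ L`
for every edge `uv` and every `3 ≤ i ≤ 2ℓ`.  Then for every `2 ≤ k ≤ ℓ`, every vertex `v`
and every `u ∈ Γ_k(v)`, we have `|N_F(u) ∩ Γ_{k-1}(v)| ≤ L(k-1) + 1`. -/
theorem statement_11 (ℓ m : ℕ) (hℓ : 1 ≤ ℓ) (hm : ℓ ≤ m) (L : ℝ) (hL : 0 < L)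
    (F : SimpleGraph (Fin m))
    (hc : ∀ u v, F.Adj u v → ∀ i, 3 ≤ i → i ≤ 2 * ℓ → (cyclesThroughEdge F i u v : ℝ) ≤ L) :
    ∀ k, 2 ≤ k → k ≤ ℓ → ∀ v u : Fin m, u ∈ distSphere F k v →
      (Nat.card ↥(F.neighborSet u ∩ distSphere F (k - 1) v) : ℝ) ≤ L * ((k : ℝ) - 1) + 1 := by
  classical
  intro k hk2 hkℓ v u hu
  have hu' : F.dist v u = k := hu
  set S : Set (Fin m) := F.neighborSet u ∩ distSphere F (k-1) v with hSdef
  have hRHS : (0:ℝ) ≤ L * ((k:ℝ) - 1) + 1 := by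
    have : (1:ℝ) ≤ (k:ℝ) := by exact_mod_cast Nat.one_le_of_lt hk2
    nlinarith
  rcases Set.eq_empty_or_nonempty S with hSe | ⟨w₁, hw₁⟩
  · rw [hSe, Nat.card_coe_set_eq, Set.ncard_empty]
    simpa using hRHS
  · obtain ⟨hadj₁, hd₁⟩ := hw₁
    have hadj₁' : F.Adj u w₁ := hadj₁
    have hd₁' : F.dist v w₁ = k - 1 := hd₁
    have hd₁'' : F.dist w₁ v = k - 1 := by rw [SimpleGraph.dist_comm]; exact hd₁'
    obtain ⟨P₁, hP₁path, hP₁len⟩ :=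
      (SimpleGraph.Reachable.of_dist_ne_zero
        (show F.dist w₁ v ≠ 0 by omega)).exists_path_of_dist
    rw [hd₁''] at hP₁len
    let T : Fin (k-1) → Type := fun j =>
      {p : F.Walk u w₁ // p.IsPath ∧ p.length = 2 * (j:ℕ) + 4 - 1 ∧ s(u, w₁) ∉ p.edges}
    haveI hTfin : ∀ j, Finite (T j) := by
      intro j
      have hinj : Function.Injective
          (fun p : T j => (⟨p.1, p.2.2.1⟩ : {p : F.Walk u w₁ // p.length = 2 * (j:ℕ) + 4 - 1})) := by
        intro p q h
        apply Subtype.ext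
        have := congrArg Subtype.val h
        exact this
      exact Finite.of_injective _ hinj
    have key : ∀ w ∈ S \ {w₁}, ∃ (j : Fin (k-1)) (p : T j), p.1.getVert 1 = w := by
      intro w hw
      obtain ⟨⟨hadj, hdw⟩, hne⟩ := hw
      have hne' : w ≠ w₁ := hne
      have hadj' : F.Adj u w := hadj
      have hdw' : F.dist v w = k - 1 := hdw
      have hdw'' : F.dist w v = k - 1 := by rw [SimpleGraph.dist_comm]; exact hdw'
      obtain ⟨Q, hQpath, hQlen⟩ :=
        (SimpleGraph.Reachable.of_dist_ne_zero
          (show F.dist w v ≠ 0 by omega)).exists_path_of_dist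
      rw [hdw''] at hQlen
      obtain ⟨x, Q₁, Q₂, hx, hQeq, hmeet⟩ :=
        walk_split Q {y | y ∈ P₁.support} (P₁.end_mem_support)
      have hx' : x ∈ P₁.support := hx
      have hQdist : (Q₁.append Q₂).length = F.dist w v := by
        rw [← hQeq, hQlen, hdw'']
      obtain ⟨hQ₁len, hQ₂len⟩ := split_lengths Q₁ Q₂ hQdist
      have hPdist : ((P₁.takeUntil x hx').append (P₁.dropUntil x hx')).length = F.dist w₁ v := by
        rw [P₁.take_spec hx', hP₁len, hd₁'']
      obtain ⟨hR₁len, hR₂len⟩ := split_lengths _ _ hPdist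
      set R₁ := P₁.takeUntil x hx' with hR₁def
      set a := Q₁.length with hadef
      -- total lengths
      have hQsum : Q₁.length + Q₂.length = k - 1 := by
        have := hQeq ▸ hQlen
        rwa [Walk.length_append] at this
      have hPsum : R₁.length + (P₁.dropUntil x hx').length = k - 1 := by
        have := (P₁.take_spec hx') ▸ hP₁len
        rwa [Walk.length_append] at this
      have haR : R₁.length = a := by omega
      have ha1 : 1 ≤ a := by
        by_contra h
        have ha0 : a = 0 := by omega
        have hwx : w = x := Walk.eq_of_length_eq_zero ha0
        have hw₁x : w₁ = x := Walk.eq_of_length_eq_zero (by omega : R₁.length = 0)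
        exact hne' (hwx.trans hw₁x.symm)
      have hak : a ≤ k - 1 := by omega
      -- u avoids supports
      have hQsup : ∀ y ∈ Q₁.support, F.dist v y ≤ k - 1 := by
        intro y hy
        have hyQ : y ∈ Q.support := by
          rw [hQeq]; exact Walk.subset_support_append_left _ _ hy
        have := dist_le_of_mem_support Q hyQ
        rw [SimpleGraph.dist_comm] at this
        omega
      have hPsup : ∀ y ∈ P₁.support, F.dist v y ≤ k - 1 := by
        intro y hy
        have := dist_le_of_mem_support P₁ hy
        rw [SimpleGraph.dist_comm] at this
        omega
      have huQ : u ∉ Q₁.support := by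
        intro h
        have := hQsup u h
        omega
      have huR : u ∉ R₁.reverse.support := by
        rw [Walk.support_reverse]
        intro h
        have h1 : u ∈ R₁.support := List.mem_reverse.mp h
        have h2 : u ∈ P₁.support := P₁.support_takeUntil_subset hx' h1
        have := hPsup u h2
        omega
      -- path structure
      have hQ₁path : Q₁.IsPath := by
        have := hQeq ▸ hQpath
        exact this.of_append_left
      have hR₁path : R₁.IsPath := hP₁path.takeUntil hx'
      have happ : (Q₁.append R₁.reverse).IsPath := by
        refine isPath_append' hQ₁path hR₁path.reverse ?_
        intro y hy hy'
        refine hmeet y hy ?_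
        have : y ∈ R₁.support := by
          rw [Walk.support_reverse] at hy'
          exact List.mem_reverse.mp hy'
        exact P₁.support_takeUntil_subset hx' this
      have huAp : u ∉ (Q₁.append R₁.reverse).support := by
        intro h
        rcases (Walk.mem_support_append_iff _ _).mp h with h' | h'
        · exact huQ h'
        · exact huR h'
      refine ⟨⟨a - 1, by omega⟩, ⟨Walk.cons hadj' (Q₁.append R₁.reverse), happ.cons huAp, ?_, ?_⟩, ?_⟩
      · show (Walk.cons hadj' (Q₁.append R₁.reverse)).length = 2 * (a - 1) + 4 - 1
        rw [Walk.length_cons, Walk.length_append, Walk.length_reverse, haR]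
        omega
      · show s(u, w₁) ∉ (Walk.cons hadj' (Q₁.append R₁.reverse)).edges
        rw [Walk.edges_cons, List.mem_cons]
        push_neg
        constructor
        · intro h
          exact hne' ((Sym2.congr_right.mp h).symm)
        · intro h
          exact huAp (Walk.fst_mem_support_of_mem_edges _ h)
      · show (Walk.cons hadj' (Q₁.append R₁.reverse)).getVert 1 = w
        rw [show (1:ℕ) = 0 + 1 from rfl, Walk.getVert_cons_succ, Walk.getVert_zero]
    -- the injection
    let g : ↥(S \ {w₁}) → Σ j, T j :=
      fun w => ⟨(key w.1 w.2).choose, (key w.1 w.2).choose_spec.choose⟩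
    have hg : Function.Injective g := by
      intro a b h
      have ha := (key a.1 a.2).choose_spec.choose_spec
      have hb := (key b.1 b.2).choose_spec.choose_spec
      apply Subtype.ext
      rw [← ha, ← hb]
      exact congrArg (fun s : Σ j, T j => s.2.1.getVert 1) h
    have hcard1 : Nat.card ↥(S \ {w₁}) ≤ Nat.card (Σ j, T j) :=
      Nat.card_le_card_of_injective g hg
    have hsig : Nat.card (Σ j, T j) = ∑ j : Fin (k-1), Nat.card (T j) := by
      letI : ∀ j, Fintype (T j) := fun j => Fintype.ofFinite _
      simp [Nat.card_eq_fintype_card, Fintype.card_sigma]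
    have hcycL : ∀ j : Fin (k-1), (Nat.card (T j) : ℝ) ≤ L := by
      intro j
      have hj := j.isLt
      have : Nat.card (T j) = cyclesThroughEdge F (2 * (j:ℕ) + 4) u w₁ := rfl
      rw [this]
      exact hc u w₁ hadj₁' _ (by omega) (by omega)
    have hfin : S.Finite := Set.toFinite S
    have hins : (S \ {w₁}).ncard + 1 = S.ncard :=
      Set.ncard_diff_singleton_add_one ⟨hadj₁, hd₁⟩ hfin
    have e1 : Nat.card ↥S = S.ncard := Nat.card_coe_set_eq S
    have e2 : Nat.card ↥(S \ {w₁}) = (S \ {w₁}).ncard := Nat.card_coe_set_eq _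
    have h1 : Nat.card ↥S ≤ (∑ j : Fin (k-1), Nat.card (T j)) + 1 := by omega
    have h2 : (∑ j : Fin (k-1), (Nat.card (T j) : ℝ)) ≤ ((k-1 : ℕ) : ℝ) * L := by
      calc ∑ j : Fin (k-1), (Nat.card (T j) : ℝ) ≤ ∑ _j : Fin (k-1), L :=
            Finset.sum_le_sum (fun j _ => hcycL j)
        _ = ((k-1 : ℕ) : ℝ) * L := by
            rw [Finset.sum_const, Finset.card_univ, Fintype.card_fin, nsmul_eq_mul]
    have hcast : ((k - 1 : ℕ) : ℝ) = (k : ℝ) - 1 := by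
      have : 1 ≤ k := by omega
      push_cast [this]
      ring
    calc (Nat.card ↥S : ℝ) ≤ ((∑ j : Fin (k-1), Nat.card (T j)) + 1 : ℕ) := by exact_mod_cast h1
      _ = (∑ j : Fin (k-1), (Nat.card (T j) : ℝ)) + 1 := by push_cast; ring
      _ ≤ ((k-1 : ℕ) : ℝ) * L + 1 := by linarith
      _ = L * ((k : ℝ) - 1) + 1 := by rw [hcast]; ring
end

section
/- Let ℓ ≥ 2 be an integer and L > 0 a constant, and let F be a graph with maximum degree Δ such that c_k(u,v;F) ≤ L for every edge uv of F and every 3 ≤ k ≤ 2ℓ. Then for every 1 ≤ s ≤ ℓ-1 and all distinct vertices u, v of F, the number of composed paths of length 2s with endpoints u and v is at most Δ^{s-1} · ((sL+1)^s + 1). -/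
/-- The number of composed paths of length `2s` from `u` to `v`: paths `u … w … v` whose two
halves (from the midpoint `w` to the two endpoints) are shortest paths of length `s`. -/
noncomputable def numComposedPaths {V : Type} (G : SimpleGraph V) (s : ℕ) (u v : V) : ℕ :=
  Nat.card {x : Σ w : V, G.Walk w u × G.Walk w v //
    (x.2.1.reverse.append x.2.2).IsPath ∧
    x.2.1.length = s ∧ x.2.2.length = s ∧
    G.dist x.1 u = s ∧ G.dist x.1 v = s}

/-!
If `w` and `w₀` are distinct neighbours of `t` joined to a vertex `x` by geodesics of the same
length `n` avoiding `t`, follow the geodesic from `w` until it first meets the one from `w₀` and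
return along the latter. Both tails from the meeting point are geodesics, so the two prefixes have
equal length, and together with `t` they close up an even cycle of length at most `2n + 2` through
the edge `t w₀`, whose second vertex is `w`. Hence at most `nL + 1` neighbours of `t` have such a
geodesic. Peeling off first edges, this bounds the number of geodesics of length `d` by
`(dL + 1)^(d - 1)`; and a composed path `u ⋯ w y ⋯ v` is determined by the walk `y ⋯ v` of length
`s - 1` (at most `Δ^(s-1)` choices), the neighbour `w` of `y` (at most `sL + 1` choices) and a
geodesic from `w` to `u` avoiding `y` (at most `(sL + 1)^(s-1)` choices).
-/

open Finset

theorem Nat.card_subtype_le_card_of_mem_range {α β : Type*} [Finite α] {P : β → Prop}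
    (f : α → β) (h : ∀ b, P b → b ∈ Set.range f) : Nat.card {b // P b} ≤ Nat.card α :=
  (Nat.card_mono (Set.finite_range f) h).trans (Finite.card_range_le f)

namespace SimpleGraph

section Walks

variable {V : Type*} {G : SimpleGraph V}

theorem Walk.exists_first_mem_support [DecidableEq V] {u v : V} (p : G.Walk u v) {S : Set V}
    (hv : v ∈ S) :
    ∃ (w : V) (hw : w ∈ p.support), w ∈ S ∧ ∀ y ∈ (p.takeUntil w hw).support, y ∈ S → y = w := by
  induction p with
  | nil => exact ⟨_, Walk.start_mem_support _, hv, by simp⟩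
  | @cons u _ _ h p ih =>
    by_cases hu : u ∈ S
    · exact ⟨u, Walk.start_mem_support _, hu, by simp [Walk.takeUntil_first]⟩
    · obtain ⟨w, hw, hwS, hfirst⟩ := ih hv
      have huw : u ≠ w := fun h => hu (h ▸ hwS)
      refine ⟨w, List.mem_of_mem_tail hw, hwS, ?_⟩
      rw [Walk.takeUntil_cons hw huw h, Walk.support_cons]
      rintro y (_ | ⟨_, hy⟩) hyS
      · exact absurd hyS hu
      · exact hfirst y hy hyS

theorem Walk.IsPath.append_reverse {u v w : V} {p : G.Walk u w} {q : G.Walk v w}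
    (hp : p.IsPath) (hq : q.IsPath) (h : ∀ y ∈ p.support, y ∈ q.support → y = w) :
    (p.append q.reverse).IsPath := by
  have hq' := hq.reverse.support_nodup
  rw [← q.reverse.cons_tail_support, List.nodup_cons] at hq'
  rw [Walk.isPath_def, Walk.support_append, List.nodup_append']
  refine ⟨hp.support_nodup, hq'.2, fun y hyp hyq => ?_⟩
  have hyq' : y ∈ q.support := by simpa using List.mem_of_mem_tail hyq
  exact hq'.1 (h y hyp hyq' ▸ hyq)

theorem Walk.length_takeUntil_add_dist [DecidableEq V] {u v w : V} {p : G.Walk u v}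
    (hp : p.length = G.dist u v) (hw : w ∈ p.support) :
    (p.takeUntil w hw).length + G.dist w v = p.length := by
  rw [← length_eq_dist_of_subwalk hp (p.isSubwalk_dropUntil hw), ← Walk.length_append,
    p.take_spec hw]

theorem exists_isPath_of_geodesics {t w w₀ x : V} (htw : G.Adj t w) (hne : w ≠ w₀)
    {p : G.Walk w x} {p₀ : G.Walk w₀ x} (hp : p.length = G.dist w x)
    (hp₀ : p₀.length = G.dist w₀ x) (hlen : p.length = p₀.length)
    (ht : t ∉ p.support) (ht₀ : t ∉ p₀.support) :
    ∃ R : G.Walk t w₀, R.IsPath ∧ s(t, w₀) ∉ R.edges ∧ R.snd = w ∧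
      ∃ j < p.length, R.length = 2 * j + 3 := by
  classical
  obtain ⟨e, he, he₀, hfirst⟩ := p.exists_first_mem_support (S := {y | y ∈ p₀.support})
    p₀.end_mem_support
  set c := p.takeUntil e he
  set c₀ := p₀.takeUntil e he₀
  have hc : c.length + G.dist e x = p.length := Walk.length_takeUntil_add_dist hp he
  have hc₀ : c₀.length + G.dist e x = p₀.length := Walk.length_takeUntil_add_dist hp₀ he₀
  have hc_pos : c.length ≠ 0 := fun h => hne <|
    (Walk.eq_of_length_eq_zero h).trans (Walk.eq_of_length_eq_zero (p := c₀) (by omega)).symm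
  have hsub : c.support ⊆ p.support := p.support_takeUntil_subset_support he
  have hsub₀ : c₀.support ⊆ p₀.support := p₀.support_takeUntil_subset_support he₀
  have hpath : (c.append c₀.reverse).IsPath :=
    ((p.isPath_of_length_eq_dist hp).takeUntil he).append_reverse
      ((p₀.isPath_of_length_eq_dist hp₀).takeUntil he₀) fun y hy hy₀ => hfirst y hy (hsub₀ hy₀)
  have ht_path : t ∉ (c.append c₀.reverse).support := by
    rw [Walk.mem_support_append_iff, Walk.support_reverse, List.mem_reverse]
    rintro (h | h)
    exacts [ht (hsub h), ht₀ (hsub₀ h)]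
  refine ⟨.cons htw (c.append c₀.reverse), (Walk.cons_isPath_iff _ _).mpr ⟨hpath, ht_path⟩,
    ?_, Walk.snd_cons _ _, c.length - 1, by omega, by simp; omega⟩
  rw [Walk.edges_cons, List.mem_cons, not_or]
  exact ⟨fun h => hne (Sym2.congr_right.mp h).symm,
    fun h => ht_path (Walk.fst_mem_support_of_mem_edges _ h)⟩

theorem card_walk_length_zero_le_one (u v : V) : Nat.card {p : G.Walk u v // p.length = 0} ≤ 1 := by
  refine (Nat.card_le_card_of_injective (fun _ => ()) fun ⟨p, hp⟩ ⟨q, hq⟩ _ => ?_).trans_eq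
    Nat.card_unique
  cases p with
  | nil => cases q with
    | nil => rfl
    | cons => simp at hq
  | cons => simp at hp

theorem card_walk_length_succ_le [G.LocallyFinite] (u v : V) (n : ℕ) :
    Nat.card {q : G.Walk u v // q.length = n + 1} ≤
      ∑ w ∈ G.neighborFinset u, Nat.card {p : G.Walk w v // p.length = n} := by
  classical
  calc Nat.card {q : G.Walk u v // q.length = n + 1}
      ≤ Nat.card (Σ w : G.neighborFinset u, {p : G.Walk w v // p.length = n}) := by
        refine Nat.card_subtype_le_card_of_mem_range
          (fun x => .cons ((G.mem_neighborFinset u x.1).mp x.1.2) x.2.1) fun q hq => ?_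
        have hq₀ : ¬q.Nil := by rw [← Walk.length_eq_zero_iff]; omega
        refine ⟨⟨⟨q.snd, (G.mem_neighborFinset _ _).mpr (q.adj_snd hq₀)⟩, q.tail, ?_⟩,
          q.cons_tail_eq hq₀⟩
        have := q.length_tail_add_one hq₀
        omega
    _ = _ := by
        rw [Nat.card_sigma]
        exact Finset.sum_coe_sort _ fun w => Nat.card {p : G.Walk w v // p.length = n}

end Walks

variable {V : Type} {G : SimpleGraph V}

def CyclesThroughEdgeLE (G : SimpleGraph V) (K : ℕ) (L : ℝ) : Prop :=
  ∀ u v, G.Adj u v → ∀ k, 3 ≤ k → k ≤ K → (cyclesThroughEdge G k u v : ℝ) ≤ L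

theorem CyclesThroughEdgeLE.mono {K K' : ℕ} {L : ℝ} (h : G.CyclesThroughEdgeLE K L)
    (hK : K' ≤ K) : G.CyclesThroughEdgeLE K' L :=
  fun u v huv k hk₃ hk => h u v huv k hk₃ (hk.trans hK)

theorem card_le_of_geodesics_avoiding [G.LocallyFinite] {n : ℕ} {L : ℝ}
    (hc : G.CyclesThroughEdgeLE (2 * n + 2) L) (hL : 0 ≤ L) {t x : V} {W : Finset V}
    (hW : ∀ w ∈ W, G.Adj t w ∧ G.dist w x = n ∧
      ∃ p : G.Walk w x, p.length = n ∧ t ∉ p.support) :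
    (#W : ℝ) ≤ n * L + 1 := by
  classical
  obtain rfl | ⟨w₀, hw₀⟩ := W.eq_empty_or_nonempty
  · simp only [card_empty, Nat.cast_zero]
    positivity
  obtain ⟨htw₀, hd₀, p₀, hp₀, ht₀⟩ := hW w₀ hw₀
  let Cyc (j : Fin n) :=
    {R : G.Walk t w₀ // R.IsPath ∧ R.length = 2 * j + 4 - 1 ∧ s(t, w₀) ∉ R.edges}
  have hR : ∀ w : W.erase w₀, ∃ (j : Fin n) (R : Cyc j), R.1.snd = w := by
    rintro ⟨w, hw⟩
    obtain ⟨hne, hw⟩ := mem_erase.mp hw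
    obtain ⟨htw, hd, p, hp, ht⟩ := hW w hw
    obtain ⟨R, hR, hRe, hRw, j, hj, hRl⟩ := exists_isPath_of_geodesics htw hne
      (hp.trans hd.symm) (hp₀.trans hd₀.symm) (hp.trans hp₀.symm) ht ht₀
    exact ⟨⟨j, hp ▸ hj⟩, ⟨R, hR, (by omega : R.length = 2 * j + 4 - 1), hRe⟩, hRw⟩
  choose j R hRw using hR
  have (j : Fin n) : Finite (Cyc j) :=
    .of_injective _ (Subtype.impEmbedding _ (fun R : G.Walk t w₀ => R.length = 2 * j + 4 - 1)
      fun _ h => h.2.1).injective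
  have hcard : #(W.erase w₀) ≤ ∑ j : Fin n, cyclesThroughEdge G (2 * j + 4) t w₀ := by
    rw [← Nat.card_eq_finsetCard]
    calc Nat.card (W.erase w₀) ≤ Nat.card (Σ j, Cyc j) :=
          Nat.card_le_card_of_injective (fun w => ⟨j w, R w⟩) fun w w' h =>
            Subtype.ext <| (hRw w).symm.trans <| (congrArg (fun c => c.2.1.snd) h).trans (hRw w')
      _ = _ := Nat.card_sigma
  calc (#W : ℝ) = #(W.erase w₀) + 1 := by exact_mod_cast (card_erase_add_one hw₀).symm
    _ ≤ ∑ j : Fin n, (cyclesThroughEdge G (2 * j + 4) t w₀ : ℝ) + 1 := by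
        gcongr
        exact_mod_cast hcard
    _ ≤ ∑ j : Fin n, L + 1 := by
        gcongr with j
        exact hc t w₀ htw₀ _ (by omega) (by omega)
    _ = n * L + 1 := by simp

theorem sum_le_of_geodesics_avoiding [G.LocallyFinite] {n : ℕ} {L M : ℝ}
    (hc : G.CyclesThroughEdgeLE (2 * n + 2) L) (hL : 0 ≤ L) {t x : V} (f : V → ℝ)
    (hf : ∀ w ∈ G.neighborFinset t, f w ≠ 0 →
      G.dist w x = n ∧ ∃ p : G.Walk w x, p.length = n ∧ t ∉ p.support)
    (hM : ∀ w, G.dist w x = n → f w ≤ M) (hM₀ : 0 ≤ M) :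
    ∑ w ∈ G.neighborFinset t, f w ≤ (n * L + 1) * M := by
  classical
  rw [← sum_filter_ne_zero]
  have hW : ∀ w ∈ {w ∈ G.neighborFinset t | f w ≠ 0}, G.Adj t w ∧ G.dist w x = n ∧
      ∃ p : G.Walk w x, p.length = n ∧ t ∉ p.support := fun w hw => by
    obtain ⟨hwt, hfw⟩ := mem_filter.mp hw
    exact ⟨(G.mem_neighborFinset t w).mp hwt, hf w hwt hfw⟩
  calc ∑ w ∈ G.neighborFinset t with f w ≠ 0, f w
      ≤ #{w ∈ G.neighborFinset t | f w ≠ 0} * M := by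
        rw [← nsmul_eq_mul]
        exact sum_le_card_nsmul _ _ _ fun w hw => hM w (hW w hw).2.1
    _ ≤ (n * L + 1) * M := by gcongr; exact card_le_of_geodesics_avoiding hc hL hW

theorem card_walk_length_eq_dist_le [G.LocallyFinite] {L : ℝ} (hL : 0 ≤ L) :
    ∀ {d : ℕ}, G.CyclesThroughEdgeLE (2 * d) L → ∀ {x y : V}, G.dist x y = d →
      (Nat.card {p : G.Walk x y // p.length = d} : ℝ) ≤ (d * L + 1) ^ (d - 1)
  | 0, _, x, y, _ => by simpa using card_walk_length_zero_le_one (G := G) x y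
  | d + 1, hc, x, y, hxy => by
    classical
    have hf : ∀ z ∈ G.neighborFinset x, (Nat.card {r : G.Walk z y // r.length = d} : ℝ) ≠ 0 →
        G.dist z y = d ∧ ∃ r : G.Walk z y, r.length = d ∧ x ∉ r.support := fun z hz h => by
      obtain ⟨r, hr⟩ := Nat.card_ne_zero.mp (by exact_mod_cast h) |>.1
      have hxz : G.dist x z = 1 := dist_eq_one_iff_adj.mpr ((G.mem_neighborFinset x z).mp hz)
      have := (G.mem_neighborFinset x z).mp hz |>.reachable.dist_triangle_left y
      have := hr ▸ dist_le r
      refine ⟨by omega, r, hr, fun hx => ?_⟩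
      have := (dist_le (r.dropUntil x hx)).trans (r.length_dropUntil_le_length hx)
      omega
    calc (Nat.card {p : G.Walk x y // p.length = d + 1} : ℝ)
        ≤ ∑ z ∈ G.neighborFinset x, (Nat.card {r : G.Walk z y // r.length = d} : ℝ) := by
          exact_mod_cast card_walk_length_succ_le x y d
      _ ≤ (d * L + 1) * (d * L + 1) ^ (d - 1) :=
          sum_le_of_geodesics_avoiding (hc.mono (by omega)) hL _ hf
            (fun z hz => card_walk_length_eq_dist_le hL (hc.mono (by omega)) hz) (by positivity)
      _ = (d * L + 1) ^ d := by cases d <;> simp [pow_succ']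
      _ ≤ ((d + 1 : ℕ) * L + 1) ^ (d + 1 - 1) := by
          rw [Nat.add_sub_cancel]
          gcongr
          linarith

theorem sum_card_walk_length_le [Fintype V] [DecidableRel G.Adj] (v : V) :
    ∀ n, ∑ y, Nat.card {r : G.Walk y v // r.length = n} ≤ G.maxDegree ^ n
  | 0 => by
    rw [sum_eq_single v (fun y _ hy =>
      Nat.card_eq_zero.mpr (.inl ⟨fun r => hy (Walk.eq_of_length_eq_zero r.2)⟩)) (by simp)]
    simpa using card_walk_length_zero_le_one (G := G) v v
  | n + 1 => calc
    ∑ y, Nat.card {r : G.Walk y v // r.length = n + 1}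
        ≤ ∑ y, ∑ z ∈ G.neighborFinset y, Nat.card {r : G.Walk z v // r.length = n} :=
          sum_le_sum fun y _ => card_walk_length_succ_le y v n
    _ = ∑ z, G.degree z * Nat.card {r : G.Walk z v // r.length = n} := by
          rw [sum_comm' (t' := univ) (s' := fun z => G.neighborFinset z) (by simp [adj_comm])]
          simp [card_neighborFinset_eq_degree]
    _ ≤ ∑ z, G.maxDegree * Nat.card {r : G.Walk z v // r.length = n} := by
          gcongr with z; exact G.degree_le_maxDegree z
    _ ≤ G.maxDegree ^ (n + 1) := by
          rw [← mul_sum, pow_succ']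
          gcongr
          exact sum_card_walk_length_le v n

theorem numComposedPaths_le_sum [Fintype V] [G.LocallyFinite] {s : ℕ} (hs : 1 ≤ s) (u v : V) :
    numComposedPaths G s u v ≤ ∑ y, Nat.card {r : G.Walk y v // r.length = s - 1} *
      ∑ w ∈ G.neighborFinset y,
        Nat.card {p : G.Walk w u // p.length = s ∧ G.dist w u = s ∧ y ∉ p.support} := by
  classical
  let Fibre (y : V) (w : V) :=
    {p : G.Walk w u // p.length = s ∧ G.dist w u = s ∧ y ∉ p.support}
  have (y w : V) : Finite (Fibre y w) :=
    .of_injective _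
      (Subtype.impEmbedding _ (fun p : G.Walk w u => p.length = s) fun _ h => h.1).injective
  calc numComposedPaths G s u v
      ≤ Nat.card (Σ y, {r : G.Walk y v // r.length = s - 1} ×
          Σ w : G.neighborFinset y, Fibre y w) := by
        refine Nat.card_subtype_le_card_of_mem_range (fun x => ⟨x.2.2.1, x.2.2.2.1,
          .cons ((G.mem_neighborFinset _ _).mp x.2.2.1.2).symm x.2.1.1⟩) ?_
        rintro ⟨w, p, q⟩ ⟨hpath, hp, hq, hdu, -⟩
        dsimp only at hpath hp hq hdu
        have hq₀ : ¬q.Nil := by rw [← Walk.length_eq_zero_iff]; omega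
        have hy : q.snd ∉ p.support := fun hy =>
          hpath.disjoint_support_of_append hq₀ (by simpa using hy) q.tail.start_mem_support
        refine ⟨⟨q.snd, ⟨q.tail, ?_⟩,
          ⟨w, (G.mem_neighborFinset _ _).mpr (q.adj_snd hq₀).symm⟩, p, hp, hdu, hy⟩, ?_⟩
        · have := q.length_tail_add_one hq₀
          omega
        · simp only [q.cons_tail_eq hq₀]
    _ = _ := by
        rw [Nat.card_sigma]
        refine sum_congr rfl fun y _ => ?_
        rw [Nat.card_prod, Nat.card_sigma]
        congr 1
        exact sum_coe_sort _ fun w => Nat.card (Fibre y w)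

theorem numComposedPaths_le [Fintype V] [DecidableRel G.Adj] {s : ℕ} {L : ℝ}
    (hc : G.CyclesThroughEdgeLE (2 * s + 2) L) (hL : 0 ≤ L) (hs : 1 ≤ s) (u v : V) :
    (numComposedPaths G s u v : ℝ) ≤ G.maxDegree ^ (s - 1) * (s * L + 1) ^ s := by
  classical
  have hfibre (y : V) : ∑ w ∈ G.neighborFinset y,
      (Nat.card {p : G.Walk w u // p.length = s ∧ G.dist w u = s ∧ y ∉ p.support} : ℝ) ≤
        (s * L + 1) ^ s := by
    calc _ ≤ (s * L + 1) * (s * L + 1) ^ (s - 1) := by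
          refine sum_le_of_geodesics_avoiding (x := u) hc hL _ (fun w _ hw => ?_) (fun w hw => ?_)
            (by positivity)
          · obtain ⟨p, hp, hd, hy⟩ := (Nat.card_ne_zero.mp (by exact_mod_cast hw)).1.some
            exact ⟨hd, p, hp, hy⟩
          · calc _ ≤ (Nat.card {p : G.Walk w u // p.length = s} : ℝ) := by
                  exact_mod_cast Nat.card_le_card_of_injective _
                    (Subtype.impEmbedding _ (fun p : G.Walk w u => p.length = s)
                      fun _ (h : _ ∧ _) => h.1).injective
              _ ≤ _ := card_walk_length_eq_dist_le hL (hc.mono (by omega)) hw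
      _ = (s * L + 1) ^ s := by rw [← pow_succ', Nat.sub_add_cancel hs]
  calc (numComposedPaths G s u v : ℝ)
      ≤ ∑ y, (Nat.card {r : G.Walk y v // r.length = s - 1} : ℝ) * ∑ w ∈ G.neighborFinset y,
          (Nat.card {p : G.Walk w u // p.length = s ∧ G.dist w u = s ∧ y ∉ p.support} : ℝ) := by
        exact_mod_cast numComposedPaths_le_sum hs u v
    _ ≤ (∑ y, (Nat.card {r : G.Walk y v // r.length = s - 1} : ℝ)) * (s * L + 1) ^ s := by
        rw [sum_mul]
        gcongr with y
        exact hfibre y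
    _ ≤ G.maxDegree ^ (s - 1) * (s * L + 1) ^ s := by
        gcongr
        exact_mod_cast sum_card_walk_length_le v (s - 1)

end SimpleGraph

theorem statement_16_general (ℓ m : ℕ) (L : ℝ) (hL : 0 < L)
    (F : SimpleGraph (Fin m)) [DecidableRel F.Adj]
    (hc : ∀ u v, F.Adj u v → ∀ k, 3 ≤ k → k ≤ 2 * ℓ →
      (cyclesThroughEdge F k u v : ℝ) ≤ L) :
    ∀ s, 1 ≤ s → s ≤ ℓ - 1 → ∀ u v : Fin m, u ≠ v →
      (numComposedPaths F s u v : ℝ) ≤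
        (F.maxDegree : ℝ) ^ (s - 1) * (((s : ℝ) * L + 1) ^ s + 1) := by
  intro s hs₁ hsℓ u v _
  have hcs : F.CyclesThroughEdgeLE (2 * s + 2) L :=
    fun a b hab k hk₃ hk => hc a b hab k hk₃ (by omega)
  calc (numComposedPaths F s u v : ℝ) ≤ F.maxDegree ^ (s - 1) * (s * L + 1) ^ s :=
        SimpleGraph.numComposedPaths_le hcs hL.le hs₁ u v
    _ ≤ F.maxDegree ^ (s - 1) * ((s * L + 1) ^ s + 1) := by gcongr; linarith

/-- Let `ℓ ≥ 2` and `L > 0`, and let `F` be a graph with `c_k(u,v;F) ≤ L` for every edge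
`uv` and every `3 ≤ k ≤ 2ℓ`.  Then for every `1 ≤ s ≤ ℓ - 1` and all distinct vertices
`u, v`, the number of composed paths of length `2s` with endpoints `u` and `v` is at most
`Δ(F)^{s-1} · ((sL+1)^s + 1)`. -/
theorem statement_16 (ℓ m : ℕ) (hℓ : 2 ≤ ℓ) (L : ℝ) (hL : 0 < L)
    (F : SimpleGraph (Fin m)) [DecidableRel F.Adj]
    (hc : ∀ u v, F.Adj u v → ∀ k, 3 ≤ k → k ≤ 2 * ℓ →
      (cyclesThroughEdge F k u v : ℝ) ≤ L) :
    ∀ s, 1 ≤ s → s ≤ ℓ - 1 → ∀ u v : Fin m, u ≠ v →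
      (numComposedPaths F s u v : ℝ) ≤
        (F.maxDegree : ℝ) ^ (s - 1) * (((s : ℝ) * L + 1) ^ s + 1) :=
  statement_16_general ℓ m L hL F hc
end
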